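/- arXiv:1605.07596 — 7 statements merged into one kernel-verified Lean document; each statement's English description precedes it below -/
import Mathlib

section
/- Suppose f : ℝ → ℝ is convex with argmin f = [x_l, x_r], and f(x_r + δ) = f(x_r) + λδ^k + o(δ^k) as δ ↓ 0 for some λ > 0, k > 1. Then for every C > 1 there is ε₀ > 0 such that for all ε ∈ (0, ε₀): x_r + (ε/(Cλk))^{1/(k-1)} ≤ inf ∂f*(ε) ≤ sup ∂f*(ε) ≤ x_r + (Cε/λ)^{1/(k-1)}. -/
/-!
For `ε > 0`, `x ∈ ∂f*(ε)` exactly when `ε` is a subgradient of `f` at `x` (Fenchel–Young), and a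
subgradient at `x` bounds every secant slope of `f` to the right of `x` from below and every one
to the left from above. Write `f (xr + δ) - f xr = ρ(δ) δ^k` with `ρ(δ) → λ`. With
`b^(k-1) = Cε/λ`, the secant slope on `[xr, xr + b]` is `ρ(b) Cε/λ > ε`; with
`d^(k-1) = ε/(Cλk)`, the secant slope on `[xr + d, xr + τd]` is
`(ρ(τd) τ^k - ρ(d)) / (τ - 1) · ε/(Cλk) < ε`, once `τ > 1` is chosen with
`(τ^k - 1)/(τ - 1) < Ck` (this difference quotient tends to `k` as `τ → 1`).
So `∂f*(ε) ⊆ (xr + d, xr + b)`, and it is nonempty: since `xr` minimizes `f`, a minimizer of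
`f t - ε t` over `[xr, xr + b]` is a global one.
-/

noncomputable section
open Set Filter

/-- The Fenchel conjugate `f*(y) = sup_x (y·x - f(x))`, valued in `EReal`. -/
def fstarE (f : ℝ → ℝ) (y : ℝ) : EReal :=
  ⨆ x : ℝ, ((y * x - f x : ℝ) : EReal)

/-- The subdifferential of an `EReal`-valued function at `y`. -/
def subderivE (F : ℝ → EReal) (y : ℝ) : Set ℝ :=
  {x | ∀ z, F y + ((x * (z - y) : ℝ) : EReal) ≤ F z}

/-- The set of (global) minimizers of `f : ℝ → ℝ`. -/
def argminSet (f : ℝ → ℝ) : Set ℝ := {x | ∀ z, f x ≤ f z}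

open Topology

def HasSubgradientAt (f : ℝ → ℝ) (s x : ℝ) : Prop :=
  ∀ y, f x + s * (y - x) ≤ f y

section Subgradient

variable {f : ℝ → ℝ} {s x a b ε : ℝ}

lemma ConvexOn.exists_hasSubgradientAt (hf : ConvexOn ℝ univ f) (x : ℝ) :
    ∃ s, HasSubgradientAt f s x := by
  have hx : x ∈ interior (univ : Set ℝ) := by simp
  refine ⟨derivWithin f (Ioi x) x, fun y => ?_⟩
  rcases lt_trichotomy y x with hyx | rfl | hxy
  · have h := (hf.slope_le_leftDeriv_of_mem_interior (mem_univ y) hx hyx).trans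
      (hf.leftDeriv_le_rightDeriv_of_mem_interior hx)
    rw [slope_def_field, div_le_iff₀ (sub_pos.2 hyx)] at h
    linarith
  · simp
  · have h := hf.rightDeriv_le_slope_of_mem_interior hx (mem_univ y) hxy
    rw [slope_def_field, le_div_iff₀ (sub_pos.2 hxy)] at h
    linarith

namespace HasSubgradientAt

lemma le_slope (hf : ConvexOn ℝ univ f) (h : HasSubgradientAt f s x) (hxa : x ≤ a)
    (hab : a < b) : s ≤ slope f a b := by
  have hxb : s ≤ slope f x b := by
    rw [slope_def_field, le_div_iff₀ (by linarith)]
    linarith [h b]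
  rcases hxa.eq_or_lt with rfl | hxa
  · exact hxb
  · rw [slope_comm] at hxb ⊢
    exact hxb.trans (hf.slope_mono (mem_univ b) ⟨mem_univ x, (hxa.trans hab).ne⟩
      ⟨mem_univ a, hab.ne⟩ hxa.le)

lemma slope_le (hf : ConvexOn ℝ univ f) (h : HasSubgradientAt f s x) (hab : a < b)
    (hbx : b ≤ x) : slope f a b ≤ s := by
  have hax : slope f a x ≤ s := by
    rw [slope_def_field, div_le_iff₀ (by linarith)]
    linarith [h a]
  exact (hf.slope_mono (mem_univ a) ⟨mem_univ b, hab.ne'⟩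
    ⟨mem_univ x, (hab.trans_le hbx).ne'⟩ hbx).trans hax

lemma exists_of_le_slope (hf : ConvexOn ℝ univ f) (ha : HasSubgradientAt f s a) (hsε : s ≤ ε)
    (hab : a < b) (hεb : ε ≤ slope f a b) : ∃ x, HasSubgradientAt f ε x := by
  set g : ℝ → ℝ := fun t => f t - ε * t
  have hga : ∀ y ∉ Icc a b, g a ≤ g y := by
    intro y hy
    simp only [mem_Icc, not_and_or, not_le] at hy
    rcases hy with hya | hby
    · nlinarith [ha y]
    · have hslope := hεb.trans (hf.slope_mono (mem_univ a) ⟨mem_univ b, hab.ne'⟩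
        ⟨mem_univ y, (hab.trans hby).ne'⟩ hby.le)
      rw [slope_def_field, le_div_iff₀ (by linarith)] at hslope
      simp only [g]
      linarith
  have hg : ContinuousOn g (Icc a b) :=
    (hf.locallyLipschitz.continuous.sub (continuous_const.mul continuous_id)).continuousOn
  obtain ⟨m, -, hm⟩ := isCompact_Icc.exists_isMinOn (nonempty_Icc.2 hab.le) hg
  refine ⟨m, fun y => ?_⟩
  have hgm : g m ≤ g y := by
    by_cases hy : y ∈ Icc a b
    · exact hm hy
    · exact (hm (left_mem_Icc.2 hab.le)).trans (hga y hy)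
  simp only [g] at hgm
  linarith

end HasSubgradientAt

lemma le_fstarE (f : ℝ → ℝ) (s y : ℝ) : ((s * y - f y : ℝ) : EReal) ≤ fstarE f s :=
  le_iSup (fun y => ((s * y - f y : ℝ) : EReal)) y

lemma HasSubgradientAt.fstarE_eq (h : HasSubgradientAt f s x) :
    fstarE f s = ((s * x - f x : ℝ) : EReal) :=
  le_antisymm (iSup_le fun y => EReal.coe_le_coe_iff.2 (by linarith [h y])) (le_fstarE f s x)

lemma mem_subderivE_fstarE_iff (hf : ConvexOn ℝ univ f) :
    x ∈ subderivE (fstarE f) ε ↔ HasSubgradientAt f ε x := by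
  constructor
  · intro hx y
    obtain ⟨s, hs⟩ := hf.exists_hasSubgradientAt x
    have h := (add_le_add_left (le_fstarE f ε y) _).trans (hs.fstarE_eq ▸ hx s)
    rw [← EReal.coe_add, EReal.coe_le_coe_iff] at h
    linarith
  · intro hx z
    rw [hx.fstarE_eq, ← EReal.coe_add]
    convert le_fstarE f z x using 2
    ring

end Subgradient

lemma exists_one_lt_rpow_sub_one_lt_mul {k c : ℝ} (h : k < c) :
    ∃ τ, 1 < τ ∧ τ ^ k - 1 < c * (τ - 1) := by
  have hderiv : HasDerivAt (fun t : ℝ => t ^ k) k 1 := by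
    simpa using Real.hasDerivAt_rpow_const (x := 1) (p := k) (Or.inl one_ne_zero)
  have hslope : ∀ᶠ τ in 𝓝[>] (1 : ℝ), slope (fun t : ℝ => t ^ k) 1 τ < c :=
    ((hasDerivAt_iff_tendsto_slope.1 hderiv).eventually_lt_const h).filter_mono
      (nhdsWithin_mono _ fun _ ht => ne_of_gt ht)
  obtain ⟨τ, hτc, hτ⟩ := (hslope.and self_mem_nhdsWithin).exists
  refine ⟨τ, hτ, ?_⟩
  rwa [slope_def_field, Real.one_rpow, div_lt_iff₀ (sub_pos.2 hτ)] at hτc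

lemma tendsto_mul_rpow_nhdsGT_zero {c p : ℝ} (hc : 0 < c) (hp : 0 < p) :
    Tendsto (fun ε => (c * ε) ^ p) (𝓝[>] 0) (𝓝[>] 0) := by
  have hcont : ContinuousAt (fun ε : ℝ => (c * ε) ^ p) 0 :=
    (continuous_const.mul continuous_id).continuousAt.rpow_const (Or.inr hp.le)
  refine tendsto_nhdsWithin_iff.2 ⟨?_, ?_⟩
  · simpa [Real.zero_rpow hp.ne'] using hcont.tendsto.mono_left nhdsWithin_le_nhds
  · filter_upwards [self_mem_nhdsWithin] with ε (hε : 0 < ε)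
    exact Real.rpow_pos_of_pos (mul_pos hc hε) p

lemma tendsto_const_mul_nhdsGT_zero {c : ℝ} (hc : 0 < c) :
    Tendsto (fun δ => c * δ) (𝓝[>] 0) (𝓝[>] 0) := by
  refine tendsto_nhdsWithin_iff.2 ⟨?_, ?_⟩
  · exact ((continuous_const_mul c).tendsto' 0 0 (mul_zero c)).mono_left nhdsWithin_le_nhds
  · filter_upwards [self_mem_nhdsWithin] with δ (hδ : 0 < δ)
    exact mul_pos hc hδ

def growthRatio (f : ℝ → ℝ) (x₀ k δ : ℝ) : ℝ :=
  (f (x₀ + δ) - f x₀) / δ ^ k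

section GrowthRatio

variable {f : ℝ → ℝ} {x₀ lam k : ℝ}

lemma sub_eq_growthRatio_mul {δ : ℝ} (hδ : 0 < δ) :
    f (x₀ + δ) - f x₀ = growthRatio f x₀ k δ * δ ^ k :=
  (div_mul_cancel₀ _ (Real.rpow_pos_of_pos hδ k).ne').symm

lemma tendsto_growthRatio
    (h : Tendsto (fun δ : ℝ => (f (x₀ + δ) - f x₀ - lam * δ ^ k) / δ ^ k) (𝓝[>] 0) (𝓝 0)) :
    Tendsto (growthRatio f x₀ k) (𝓝[>] 0) (𝓝 lam) := by
  refine (zero_add lam ▸ h.add_const lam).congr' ?_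
  filter_upwards [self_mem_nhdsWithin] with δ (hδ : 0 < δ)
  rw [growthRatio, sub_div, mul_div_cancel_right₀ _ (Real.rpow_pos_of_pos hδ k).ne', sub_add_cancel]

lemma slope_eq_growthRatio {δ : ℝ} (hδ : 0 < δ) :
    slope f x₀ (x₀ + δ) = growthRatio f x₀ k δ * δ ^ (k - 1) := by
  rw [slope_def_field, add_sub_cancel_left, sub_eq_growthRatio_mul (k := k) hδ,
    Real.rpow_sub_one hδ.ne', mul_div_assoc]

lemma slope_mul_eq_growthRatio {δ τ : ℝ} (hδ : 0 < δ) (hτ : 1 < τ) :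
    slope f (x₀ + δ) (x₀ + τ * δ) =
      (growthRatio f x₀ k (τ * δ) * τ ^ k - growthRatio f x₀ k δ) * δ ^ (k - 1) / (τ - 1) := by
  have hτδ : 0 < τ * δ := mul_pos (by linarith) hδ
  have hdiff : f (x₀ + τ * δ) - f (x₀ + δ) = (f (x₀ + τ * δ) - f x₀) - (f (x₀ + δ) - f x₀) := by
    ring
  have hlen : x₀ + τ * δ - (x₀ + δ) = (τ - 1) * δ := by ring
  rw [slope_def_field, hdiff, hlen, sub_eq_growthRatio_mul (k := k) hτδ,
    sub_eq_growthRatio_mul (k := k) hδ,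
    Real.mul_rpow (by linarith) hδ.le, Real.rpow_sub_one hδ.ne']
  have hτ1 : τ - 1 ≠ 0 := by linarith
  field_simp

variable (hR : Tendsto (growthRatio f x₀ k) (𝓝[>] 0) (𝓝 lam)) (hk : 1 < k)
include hR hk

lemma eventually_lt_slope_of_tendsto_growthRatio {C : ℝ} (hlam : 0 < lam) (hC : 1 < C) :
    ∀ᶠ ε in 𝓝[>] 0, ε < slope f x₀ (x₀ + (C * ε / lam) ^ (1 / (k - 1))) := by
  have hb : Tendsto (fun ε => (C * ε / lam) ^ (1 / (k - 1))) (𝓝[>] 0) (𝓝[>] 0) := by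
    simpa only [mul_div_right_comm] using
      tendsto_mul_rpow_nhdsGT_zero (c := C / lam) (by positivity) (by simpa using hk)
  filter_upwards [(hR.comp hb).eventually (lt_mem_nhds (div_lt_self hlam hC)),
    self_mem_nhdsWithin] with ε (hε : lam / C < _) (hε0 : 0 < ε)
  have hbε : 0 < (C * ε / lam) ^ (1 / (k - 1)) := Real.rpow_pos_of_pos (by positivity) _
  have hpow : ((C * ε / lam) ^ (1 / (k - 1))) ^ (k - 1) = C * ε / lam := by
    rw [one_div, Real.rpow_inv_rpow (by positivity) (by linarith)]
  rw [slope_eq_growthRatio hbε, hpow]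
  calc ε = lam / C * (C * ε / lam) := by field_simp
    _ < _ := mul_lt_mul_of_pos_right hε (by positivity)

lemma eventually_slope_lt_of_tendsto_growthRatio {c τ : ℝ} (hc : 0 < c) (hτ : 1 < τ)
    (hτc : lam * (τ ^ k - 1) < c * (τ - 1)) :
    ∀ᶠ ε in 𝓝[>] 0, slope f (x₀ + (ε / c) ^ (1 / (k - 1)))
      (x₀ + τ * (ε / c) ^ (1 / (k - 1))) < ε := by
  have hd : Tendsto (fun ε => (ε / c) ^ (1 / (k - 1))) (𝓝[>] 0) (𝓝[>] 0) := by
    simpa only [div_eq_inv_mul _ c] using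
      tendsto_mul_rpow_nhdsGT_zero (c := c⁻¹) (by positivity) (by simpa using hk)
  have hτd := (tendsto_const_mul_nhdsGT_zero (c := τ) (by linarith)).comp hd
  have hlim := ((hR.comp hτd).mul_const (τ ^ k)).sub (hR.comp hd)
  filter_upwards [hlim.eventually (gt_mem_nhds (by linarith : lam * τ ^ k - lam < c * (τ - 1))),
    self_mem_nhdsWithin] with ε (hε : _ < c * (τ - 1)) (hε0 : 0 < ε)
  have hdε : 0 < (ε / c) ^ (1 / (k - 1)) := Real.rpow_pos_of_pos (by positivity) _
  have hpow : ((ε / c) ^ (1 / (k - 1))) ^ (k - 1) = ε / c := by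
    rw [one_div, Real.rpow_inv_rpow (by positivity) (by linarith)]
  rw [slope_mul_eq_growthRatio hdε hτ, hpow, div_lt_iff₀ (by linarith)]
  calc _ < c * (τ - 1) * (ε / c) := mul_lt_mul_of_pos_right hε (by positivity)
    _ = ε * (τ - 1) := by field_simp

end GrowthRatio

/-- If `f` is convex with `argmin f = [x_l, x_r]` and `f(x_r + δ) = f(x_r) + λ δ^k + o(δ^k)`
as `δ ↓ 0` with `λ > 0`, `k > 1`, then for every `C > 1` there is `ε₀ > 0` such that for all
`ε ∈ (0, ε₀)`:
`x_r + (ε/(Cλk))^{1/(k-1)} ≤ inf ∂f*(ε) ≤ sup ∂f*(ε) ≤ x_r + (Cε/λ)^{1/(k-1)}`. -/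
theorem conjugate_subdifferential_growth (f : ℝ → ℝ) (hconv : ConvexOn ℝ Set.univ f)
    (xl xr : ℝ) (hxlr : xl ≤ xr) (hargmin : argminSet f = Icc xl xr)
    (lam k : ℝ) (hlam : 0 < lam) (hk : 1 < k)
    (hgrowth : Tendsto (fun δ : ℝ => (f (xr + δ) - f xr - lam * δ ^ k) / δ ^ k)
      (nhdsWithin 0 (Ioi 0)) (nhds 0)) :
    ∀ C : ℝ, 1 < C → ∃ ε₀ > 0, ∀ ε ∈ Ioo 0 ε₀,
      xr + (ε / (C * lam * k)) ^ (1 / (k - 1)) ≤ sInf (subderivE (fstarE f) ε) ∧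
      sInf (subderivE (fstarE f) ε) ≤ sSup (subderivE (fstarE f) ε) ∧
      sSup (subderivE (fstarE f) ε) ≤ xr + (C * ε / lam) ^ (1 / (k - 1)) := by
  intro C hC
  obtain ⟨τ, hτ, hτk⟩ := exists_one_lt_rpow_sub_one_lt_mul (c := C * k)
    (lt_mul_of_one_lt_left (by linarith) hC)
  have hR := tendsto_growthRatio hgrowth
  obtain ⟨ε₀, hε₀, hslopes⟩ := (nhdsGT_basis 0).eventually_iff.1
    ((eventually_lt_slope_of_tendsto_growthRatio hR hk hlam hC).and
      (eventually_slope_lt_of_tendsto_growthRatio hR hk (c := C * lam * k) (by positivity) hτ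
        (by nlinarith)))
  refine ⟨ε₀, hε₀, fun ε hε => ?_⟩
  obtain ⟨hupper, hlower⟩ := hslopes hε
  have hε0 : 0 < ε := hε.1
  have hmin : xr ∈ argminSet f := hargmin ▸ right_mem_Icc.2 hxlr
  have hxr : HasSubgradientAt f 0 xr := fun y => by simpa using hmin y
  have hsub : ∀ x ∈ subderivE (fstarE f) ε,
      xr + (ε / (C * lam * k)) ^ (1 / (k - 1)) < x ∧ x < xr + (C * ε / lam) ^ (1 / (k - 1)) := by
    intro x hx
    rw [mem_subderivE_fstarE_iff hconv] at hx
    constructor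
    · by_contra! h
      exact hlower.not_ge
        (hx.le_slope hconv h (by gcongr; exact lt_mul_of_one_lt_left (by positivity) hτ))
    · by_contra! h
      exact hupper.not_ge (hx.slope_le hconv (lt_add_of_pos_right xr (by positivity)) h)
  obtain ⟨x, hx⟩ := hxr.exists_of_le_slope hconv hε0.le
    (lt_add_of_pos_right xr (by positivity)) hupper.le
  have hne : (subderivE (fstarE f) ε).Nonempty := ⟨x, (mem_subderivE_fstarE_iff hconv).2 hx⟩
  exact ⟨le_csInf hne fun x hx => (hsub x hx).1.le,
    csInf_le_csSup hne ⟨_, fun x hx => (hsub x hx).1.le⟩ ⟨_, fun x hx => (hsub x hx).2.le⟩,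
    csSup_le hne fun x hx => (hsub x hx).2.le⟩
end
end

section
/- For f(x) = (1/k)|x|^k on [-1,1] with k > 1, the modulus of continuity satisfies ω_f(ε) = ε^{1/(k-1)} for all ε ∈ (0,1). -/
noncomputable section
open Set

/-- For `f(x) = (1/k)|x|^k` on `[-1,1]` with `k > 1`, the (one-dimensional) modulus of
continuity `ω_f(ε) = sup {inf_{x ∈ argmin f} |x - y| : y ∈ [-1,1], |f'(y)| < ε}` equals
`ε^{1/(k-1)}` for all `ε ∈ (0,1)`.  Here `argmin f = {0}` and `|f'(y)| = |y|^{k-1}`. -/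
theorem modulus_of_power_function (k : ℝ) (hk : 1 < k) (ε : ℝ) (hε : ε ∈ Ioo (0 : ℝ) 1) :
    sSup {r | ∃ y ∈ Icc (-1 : ℝ) 1, |y| ^ (k - 1) < ε ∧ r = |y - 0|} = ε ^ (1 / (k - 1)) := by
  obtain ⟨hε0, hε1⟩ := hε
  have hk0 : 0 < k - 1 := by linarith
  set c : ℝ := ε ^ (1 / (k - 1)) with hc
  have hc0 : 0 < c := Real.rpow_pos_of_pos hε0 _
  have hc1 : c < 1 := Real.rpow_lt_one hε0.le hε1 (by positivity)
  have hck : c ^ (k - 1) = ε := by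
    rw [hc, ← Real.rpow_mul hε0.le, one_div, inv_mul_cancel₀ (ne_of_gt hk0), Real.rpow_one]
  have hset : {r | ∃ y ∈ Icc (-1 : ℝ) 1, |y| ^ (k - 1) < ε ∧ r = |y - 0|} = Ico 0 c := by
    ext r
    constructor
    · rintro ⟨y, _, hy, rfl⟩
      rw [sub_zero]
      refine ⟨abs_nonneg y, ?_⟩
      by_contra h
      push_neg at h
      exact absurd hy (not_lt.2 (hck ▸ Real.rpow_le_rpow hc0.le h hk0.le))
    · rintro ⟨hr0, hrc⟩
      refine ⟨r, ⟨by linarith, by linarith⟩, ?_, by rw [sub_zero, abs_of_nonneg hr0]⟩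
      rw [abs_of_nonneg hr0, ← hck]
      exact Real.rpow_lt_rpow hr0 hrc hk0
  rw [hset, csSup_Ico hc0]
end
end

section
/- For the asymmetric function f(x) = (1/k_l)|x|^{k_l} on [-1,0] and (1/k_r)|x|^{k_r} on (0,1], with k_l, k_r > 1, the modulus of continuity satisfies ω_f(ε) = ε^{1/(max{k_l,k_r}-1)} for small ε > 0. -/
noncomputable section
open Set

/-- The derivative of the asymmetric power function
`f(x) = (1/k_l)|x|^{k_l}` for `x ≤ 0` and `(1/k_r)|x|^{k_r}` for `x > 0`. -/
noncomputable def asymDeriv (kl kr : ℝ) (y : ℝ) : ℝ :=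
  if y < 0 then -((-y) ^ (kl - 1)) else y ^ (kr - 1)

/-- For the asymmetric function `f(x) = (1/k_l)|x|^{k_l}` on `[-1,0]`, `(1/k_r)|x|^{k_r}` on
`(0,1]`, with `k_l, k_r > 1` and unique minimizer `0`, the one-dimensional modulus of
continuity `ω_f(ε) = sup {inf_{x ∈ argmin f} |x - y| : y ∈ [-1,1], |f'(y)| < ε}` satisfies
`ω_f(ε) = ε^{1/(max(k_l,k_r) - 1)}` for all small `ε > 0`. -/
theorem modulus_of_asymmetric_power_function (kl kr : ℝ) (hkl : 1 < kl) (hkr : 1 < kr) :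
    ∃ ε₀ > 0, ∀ ε ∈ Ioo (0 : ℝ) ε₀,
      sSup {r | ∃ y ∈ Icc (-1 : ℝ) 1, |asymDeriv kl kr y| < ε ∧ r = |y - 0|} =
        ε ^ (1 / (max kl kr - 1)) := by
  refine ⟨1, one_pos, fun ε hε => ?_⟩
  obtain ⟨hε0, hε1⟩ := hε
  have hkl' : 0 < kl - 1 := by linarith
  have hkr' : 0 < kr - 1 := by linarith
  have hkm' : 0 < max kl kr - 1 := lt_of_lt_of_le hkl' (by simp [le_max_left])
  set a := ε ^ (1 / (kl - 1)) with ha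
  set b := ε ^ (1 / (kr - 1)) with hb
  set M := ε ^ (1 / (max kl kr - 1)) with hM
  have hanti : ∀ s t : ℝ, 0 < s → s ≤ t → ε ^ (1/s) ≤ ε ^ (1/t) := fun s t hs hst =>
    Real.rpow_le_rpow_of_exponent_ge hε0 hε1.le
      (one_div_le_one_div_of_le hs hst)
  have hMmax : M = max a b := by
    rcases max_cases kl kr with ⟨h1, h2⟩ | ⟨h1, h2⟩
    · rw [hM, h1, max_eq_left]
      exact hanti _ _ hkr' (by linarith)
    · rw [hM, h1, max_eq_right]
      exact hanti _ _ hkl' (by linarith)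
  have hMpos : 0 < M := Real.rpow_pos_of_pos hε0 _
  have hlt1 : ∀ s : ℝ, 0 < s → ε ^ (1/s) < 1 := fun s hs =>
    Real.rpow_lt_one hε0.le hε1 (by positivity)
  have haux : ∀ s y : ℝ, 0 < s → 0 ≤ y → (y ^ s < ε ↔ y < ε ^ (1/s)) := by
    intro s y hs hy
    rw [one_div, Real.lt_rpow_inv_iff_of_pos hy hε0.le hs]
  have hSeq : {r | ∃ y ∈ Icc (-1 : ℝ) 1, |asymDeriv kl kr y| < ε ∧ r = |y - 0|}
      = Ico 0 M := by
    ext r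
    simp only [mem_setOf_eq, mem_Ico]
    constructor
    · rintro ⟨y, hy, hd, rfl⟩
      refine ⟨abs_nonneg _, ?_⟩
      rw [sub_zero]
      by_cases hy0 : y < 0
      · have : asymDeriv kl kr y = -((-y) ^ (kl - 1)) := if_pos hy0
        rw [this, abs_neg, abs_of_nonneg (Real.rpow_nonneg (by linarith) _)] at hd
        have := (haux (kl - 1) (-y) hkl' (by linarith)).mp hd
        calc |y| = -y := abs_of_neg hy0
          _ < a := this
          _ ≤ M := hMmax ▸ le_max_left _ _
      · push_neg at hy0
        have : asymDeriv kl kr y = y ^ (kr - 1) := if_neg (not_lt.mpr hy0)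
        rw [this, abs_of_nonneg (Real.rpow_nonneg hy0 _)] at hd
        have := (haux (kr - 1) y hkr' hy0).mp hd
        calc |y| = y := abs_of_nonneg hy0
          _ < b := this
          _ ≤ M := hMmax ▸ le_max_right _ _
    · rintro ⟨hr0, hrM⟩
      rw [hMmax] at hrM
      rcases lt_max_iff.mp hrM with h | h
      · refine ⟨-r, ⟨by linarith [lt_trans h (hlt1 _ hkl')], by linarith⟩, ?_, by
          rw [sub_zero, abs_neg, abs_of_nonneg hr0]⟩
        rcases eq_or_lt_of_le hr0 with h0 | h0
        · simp [asymDeriv, ← h0, Real.zero_rpow (ne_of_gt hkr'), hε0]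
        · rw [asymDeriv, if_pos (by linarith : -r < 0), abs_neg, neg_neg,
            abs_of_nonneg (Real.rpow_nonneg hr0 _)]
          exact (haux (kl - 1) r hkl' hr0).mpr h
      · refine ⟨r, ⟨by linarith, by linarith [lt_trans h (hlt1 _ hkr')]⟩, ?_, by
          rw [sub_zero, abs_of_nonneg hr0]⟩
        rw [asymDeriv, if_neg (not_lt.mpr hr0), abs_of_nonneg (Real.rpow_nonneg hr0 _)]
        exact (haux (kr - 1) r hkr' hr0).mpr h
  rw [hSeq, csSup_Ico hMpos]
end
end

section
/- Two-point estimation lower bound: for any estimator x̂ measurable with respect to a sample, and compact convex sets X₀, X₁ associated with distributions P₀, P₁, one has E_{P₁}[dist(x̂, X₁)] ≥ max{0, dist(X₀, X₁) − sqrt(E_{P₀}[dist(x̂, X₀)²] · (χ²(P₁‖P₀) + 1))}. -/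
open MeasureTheory Metric

/-! The triangle inequality gives, pointwise in the sample,
`dist(X₀, X₁) ≤ dist(x̂, X₀) + dist(x̂, X₁)`, so after integrating against `P₁` it remains to bound
`E_{P₁}[dist(x̂, X₀)]`. Changing measure to `P₀` writes it as `E_{P₀}[ρ · dist(x̂, X₀)]` with
`ρ = dP₁/dP₀`, and Cauchy–Schwarz bounds this by the square root of
`E_{P₀}[dist(x̂, X₀)²] · E_{P₀}[ρ²]`, where `E_{P₀}[ρ²] = E_{P₁}[ρ] = χ²(P₁‖P₀) + 1`. -/

theorem sInf_dist_le_infDist_add_infDist {α : Type*} [PseudoMetricSpace α] (A B : Set α) (z : α) :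
    sInf {r | ∃ x ∈ A, ∃ y ∈ B, r = dist x y} ≤ infDist z A + infDist z B := by
  have hsum_nonneg : 0 ≤ infDist z A + infDist z B := add_nonneg infDist_nonneg infDist_nonneg
  rcases A.eq_empty_or_nonempty with rfl | hA
  · simpa using hsum_nonneg
  rcases B.eq_empty_or_nonempty with rfl | hB
  · simpa using hsum_nonneg
  set D := sInf {r | ∃ x ∈ A, ∃ y ∈ B, r = dist x y}
  have hbdd : BddBelow {r | ∃ x ∈ A, ∃ y ∈ B, r = dist x y} :=
    ⟨0, by rintro r ⟨x, -, y, -, rfl⟩; exact dist_nonneg⟩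
  have hA_bound : ∀ x ∈ A, D - infDist z B ≤ dist z x := fun x hx => by
    have hD : D ≤ infDist x B :=
      (le_infDist hB).2 fun y hy => csInf_le hbdd ⟨x, hx, y, hy, rfl⟩
    linarith [infDist_le_infDist_add_dist (x := x) (y := z) (s := B), dist_comm x z]
  linarith [(le_infDist hA).2 hA_bound]

theorem integral_mul_le_sqrt_mul_sqrt_of_nonneg {α : Type*} [MeasurableSpace α] {μ : Measure α}
    {f g : α → ℝ} (hf_nonneg : 0 ≤ᵐ[μ] f) (hg_nonneg : 0 ≤ᵐ[μ] g) (hf : MemLp f 2 μ)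
    (hg : MemLp g 2 μ) :
    ∫ a, f a * g a ∂μ ≤ Real.sqrt (∫ a, f a ^ 2 ∂μ) * Real.sqrt (∫ a, g a ^ 2 ∂μ) := by
  have h2 : ENNReal.ofReal 2 = 2 := by norm_num
  have := integral_mul_le_Lp_mul_Lq_of_nonneg Real.HolderConjugate.two_two hf_nonneg hg_nonneg
    (h2 ▸ hf) (h2 ▸ hg)
  simpa only [Real.rpow_two, Real.sqrt_eq_rpow] using this

section ChangeOfMeasure

variable {α : Type*} [MeasurableSpace α] {μ ν : Measure α} [SigmaFinite μ]
  [μ.HaveLebesgueDecomposition ν]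

theorem integral_toReal_rnDeriv_eq_integral_sq (hμν : μ ≪ ν) :
    ∫ a, (μ.rnDeriv ν a).toReal ∂μ = ∫ a, (μ.rnDeriv ν a).toReal ^ 2 ∂ν := by
  simp_rw [sq]
  exact (integral_toReal_rnDeriv_mul hμν).symm

theorem memLp_two_toReal_rnDeriv (hμν : μ ≪ ν)
    (hρ : Integrable (fun a => (μ.rnDeriv ν a).toReal) μ) :
    MemLp (fun a => (μ.rnDeriv ν a).toReal) 2 ν := by
  refine (memLp_two_iff_integrable_sq
    (Measure.measurable_rnDeriv μ ν).ennreal_toReal.aestronglyMeasurable).2 ?_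
  simp_rw [sq]
  exact (integrable_toReal_rnDeriv_mul_iff hμν).2 hρ

theorem MeasureTheory.MemLp.integrable_of_integrable_rnDeriv (hμν : μ ≪ ν) {f : α → ℝ}
    (hf : MemLp f 2 ν) (hρ : Integrable (fun a => (μ.rnDeriv ν a).toReal) μ) :
    Integrable f μ := by
  refine (integrable_toReal_rnDeriv_mul_iff hμν).1 ?_
  exact memLp_one_iff_integrable.1 (hf.mul' (memLp_two_toReal_rnDeriv hμν hρ) (r := 1))

theorem integral_le_sqrt_integral_sq_mul_integral_rnDeriv (hμν : μ ≪ ν) {f : α → ℝ}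
    (hf_nonneg : 0 ≤ᵐ[ν] f) (hf : MemLp f 2 ν)
    (hρ : Integrable (fun a => (μ.rnDeriv ν a).toReal) μ) :
    ∫ a, f a ∂μ ≤ Real.sqrt ((∫ a, f a ^ 2 ∂ν) * ∫ a, (μ.rnDeriv ν a).toReal ∂μ) := by
  rw [← integral_toReal_rnDeriv_mul hμν, Real.sqrt_mul (integral_nonneg_of_ae
      (hf_nonneg.mono fun a _ => sq_nonneg (f a))), integral_toReal_rnDeriv_eq_integral_sq hμν]
  simp_rw [mul_comm (μ.rnDeriv ν _).toReal]
  exact integral_mul_le_sqrt_mul_sqrt_of_nonneg hf_nonneg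
    (.of_forall fun _ => ENNReal.toReal_nonneg) hf (memLp_two_toReal_rnDeriv hμν hρ)

end ChangeOfMeasure

theorem two_point_superefficiency_lower_bound_general
    {Ω : Type*} [MeasurableSpace Ω] (P₀ P₁ : Measure Ω)
    [IsProbabilityMeasure P₀] [IsProbabilityMeasure P₁] (hac : P₁ ≪ P₀)
    (xhat : Ω → ℝ) (hxhat : Measurable xhat)
    (X₀ X₁ : Set ℝ)
    (hint₁ : Integrable (fun ω => Metric.infDist (xhat ω) X₁) P₁)
    (hint₀ : Integrable (fun ω => (Metric.infDist (xhat ω) X₀) ^ 2) P₀)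
    (hintχ : Integrable (fun ω => (P₁.rnDeriv P₀ ω).toReal) P₁) :
    ∫ ω, Metric.infDist (xhat ω) X₁ ∂P₁ ≥
      max 0 (sInf {r | ∃ x ∈ X₀, ∃ y ∈ X₁, r = |x - y|} -
        Real.sqrt ((∫ ω, (Metric.infDist (xhat ω) X₀) ^ 2 ∂P₀) *
          (((∫ ω, (P₁.rnDeriv P₀ ω).toReal ∂P₁) - 1) + 1))) := by
  set D := sInf {r | ∃ x ∈ X₀, ∃ y ∈ X₁, r = |x - y|}
  set d₀ : Ω → ℝ := fun ω => infDist (xhat ω) X₀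
  have hd₀ : MemLp d₀ 2 P₀ := (memLp_two_iff_integrable_sq
    ((continuous_infDist_pt X₀).measurable.comp hxhat).aestronglyMeasurable).2 hint₀
  have hd₀_int : Integrable d₀ P₁ := hd₀.integrable_of_integrable_rnDeriv hac hintχ
  have hpoint : ∀ ω, D - d₀ ω ≤ infDist (xhat ω) X₁ := fun ω => by
    have := sInf_dist_le_infDist_add_infDist X₀ X₁ (xhat ω)
    simp only [Real.dist_eq] at this
    linarith
  have hmean : ∫ ω, d₀ ω ∂P₁ ≤
      Real.sqrt ((∫ ω, d₀ ω ^ 2 ∂P₀) * ∫ ω, (P₁.rnDeriv P₀ ω).toReal ∂P₁) :=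
    integral_le_sqrt_integral_sq_mul_integral_rnDeriv hac
      (.of_forall fun _ => infDist_nonneg) hd₀ hintχ
  have hlower : D - ∫ ω, d₀ ω ∂P₁ ≤ ∫ ω, infDist (xhat ω) X₁ ∂P₁ :=
    calc D - ∫ ω, d₀ ω ∂P₁ = ∫ ω, (D - d₀ ω) ∂P₁ := by
          rw [integral_sub (integrable_const D) hd₀_int, integral_const, probReal_univ, one_smul]
      _ ≤ ∫ ω, infDist (xhat ω) X₁ ∂P₁ :=
          integral_mono ((integrable_const D).sub hd₀_int) hint₁ hpoint
  rw [sub_add_cancel, ge_iff_le]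
  exact max_le (integral_nonneg fun _ => infDist_nonneg) (by linarith)

/-- Two-point estimation lower bound (a strengthened Brown–Low style bound):
`E_{P₁}[dist(x̂, X₁)] ≥ max {0, dist(X₀,X₁) − sqrt(E_{P₀}[dist(x̂,X₀)²]·(χ²(P₁‖P₀)+1))}`,
where `χ²(P₁‖P₀) = ∫ (dP₁/dP₀) dP₁ − 1`. -/
theorem two_point_superefficiency_lower_bound
    {Ω : Type*} [MeasurableSpace Ω] (P₀ P₁ : Measure Ω)
    [IsProbabilityMeasure P₀] [IsProbabilityMeasure P₁] (hac : P₁ ≪ P₀)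
    (xhat : Ω → ℝ) (hxhat : Measurable xhat)
    (X₀ X₁ : Set ℝ) (hX₀ : IsCompact X₀) (hX₁ : IsCompact X₁)
    (hc₀ : Convex ℝ X₀) (hc₁ : Convex ℝ X₁)
    (hn₀ : X₀.Nonempty) (hn₁ : X₁.Nonempty)
    (hint₁ : Integrable (fun ω => Metric.infDist (xhat ω) X₁) P₁)
    (hint₀ : Integrable (fun ω => (Metric.infDist (xhat ω) X₀) ^ 2) P₀)
    (hintχ : Integrable (fun ω => (P₁.rnDeriv P₀ ω).toReal) P₁) :
    ∫ ω, Metric.infDist (xhat ω) X₁ ∂P₁ ≥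
      max 0 (sInf {r | ∃ x ∈ X₀, ∃ y ∈ X₁, r = |x - y|} -
        Real.sqrt ((∫ ω, (Metric.infDist (xhat ω) X₀) ^ 2 ∂P₀) *
          (((∫ ω, (P₁.rnDeriv P₀ ω).toReal ∂P₁) - 1) + 1))) :=
  two_point_superefficiency_lower_bound_general P₀ P₁ hac xhat hxhat X₀ X₁ hint₁ hint₀ hintχ
end

section
/- Sequentially queried stochastic gradients satisfy: if sup_x |f'(x) − g'(x)| ≤ ε and observations are s_i = h'(x_i) + ε_i with ε_i iid N(0,σ²) and x_i measurable with respect to previous observations, then the chi-square divergence of the joint distributions over T queries satisfies χ²(P_f^T ‖ P_g^T) ≤ exp(Tε²/σ²) − 1. -/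
noncomputable section
open MeasureTheory ProbabilityTheory Set
open scoped NNReal

/-- The subdifferential of `f : ℝ → ℝ` at `x`. -/
def subderiv (f : ℝ → ℝ) (x : ℝ) : Set ℝ :=
  {s | ∀ z, f x + s * (z - x) ≤ f z}

/-- The minimal-norm subgradient of `f` at `x` (projection of `0` onto `∂f(x)`). -/
noncomputable def minSub (f : ℝ → ℝ) (x : ℝ) : ℝ :=
  max (sInf (subderiv f x)) (min (sSup (subderiv f x)) 0)

/-- The sequentially observed noisy subgradients: the `n`-th query point is a function
`q n` of the previous observations, and the `n`-th observation is
`s_n = fd(x_n) + ξ_n`. -/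
noncomputable def obs (T : ℕ) (fd : ℝ → ℝ) (q : ℕ → (ℕ → ℝ) → ℝ) (ξ : Fin T → ℝ) : ℕ → ℝ
  | n => fd (q n (fun j => if h : j < n then obs T fd q ξ j else 0)) +
      (if h : n < T then ξ ⟨n, h⟩ else 0)
termination_by n => n
decreasing_by exact h

/-- The joint law of `T` sequentially queried noisy subgradients of `fd`, with i.i.d.
`N(0,v)` noise. -/
noncomputable def seqLaw (T : ℕ) (v : ℝ≥0) (fd : ℝ → ℝ) (q : ℕ → (ℕ → ℝ) → ℝ) :
    Measure (Fin T → ℝ) :=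
  Measure.map (fun ξ (i : Fin T) => obs T fd q ξ i)
    (Measure.pi fun _ : Fin T => gaussianReal 0 v)

/-- `χ²(P₁‖P₀) = ∫ (dP₁/dP₀) dP₁ − 1`. -/
noncomputable def chiSq {Ω : Type*} [MeasurableSpace Ω] (P₁ P₀ : Measure Ω) : ℝ :=
  (∫ ω, (P₁.rnDeriv P₀ ω).toReal ∂P₁) - 1

/-!
Write the observation map `ξ ↦ s` as the inverse of the shear `s ↦ (s_i - fd (x_i s))_i`,
where the query point `x_i s` only depends on `s_{<i}`. Such a triangular shear preserves Lebesgue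
measure (Fubini, one coordinate at a time), so `P_f` has the Lebesgue density
`p_f s = ∏ φ (s_i - fd (x_i s))`, `φ` the `N(0, v)` density, and `P_g` has the same form with the
same query points. Completing the square,
`φ (t - a)² / φ (t - b) = exp ((a - b)² / v) * φ (t - (2a - b))`, so `p_f² / p_g` is at most
`exp (T ε² / v)` times the density of yet another shear of the Gaussian, which integrates to `1`.
-/

open Real
open scoped ENNReal

section InitLast

variable {G : Type*} [MeasurableSpace G] {n : ℕ}

variable (G n) in
def initLastEquiv : (Fin (n + 1) → G) ≃ᵐ (Fin n → G) × G :=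
  (MeasurableEquiv.piFinSuccAbove (fun _ => G) (Fin.last n)).trans MeasurableEquiv.prodComm

@[simp] theorem initLastEquiv_apply (x : Fin (n + 1) → G) :
    initLastEquiv G n x = (Fin.init x, x (Fin.last n)) := by
  ext j <;>
    simp [initLastEquiv, Fin.init, MeasurableEquiv.piFinSuccAbove, MeasurableEquiv.prodComm]

@[simp] theorem initLastEquiv_symm_apply (p : (Fin n → G) × G) :
    (initLastEquiv G n).symm p = Fin.snoc p.1 p.2 := by
  rw [MeasurableEquiv.symm_apply_eq]
  simp

theorem measurePreserving_initLastEquiv (μ : Measure G) [SigmaFinite μ] :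
    MeasurePreserving (initLastEquiv G n) (Measure.pi fun _ => μ)
      ((Measure.pi fun _ => μ).prod μ) :=
  Measure.measurePreserving_swap.comp
    (measurePreserving_piFinSuccAbove (fun _ => μ) (Fin.last n))

theorem measurable_snoc_const (c : G) :
    Measurable fun y : Fin n → G => (Fin.snoc y c : Fin (n + 1) → G) := by
  simpa [Function.comp_def] using
    (initLastEquiv G n).symm.measurable.comp (measurable_id.prodMk (measurable_const (a := c)))

end InitLast

section Shear

variable {G : Type*} [AddGroup G] {n : ℕ}

def Predictable (a : Fin n → (Fin n → G) → G) : Prop :=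
  ∀ i x y, (∀ j < i, x j = y j) → a i x = a i y

def shear (a : Fin n → (Fin n → G) → G) (x : Fin n → G) : Fin n → G :=
  fun i => x i - a i x

theorem Predictable.apply_snoc_init {a : Fin (n + 1) → (Fin (n + 1) → G) → G}
    (ha : Predictable a) (i : Fin (n + 1)) (x : Fin (n + 1) → G) :
    a i (Fin.snoc (Fin.init x) 0) = a i x :=
  ha i _ _ fun j hj => by
    obtain ⟨k, rfl⟩ :=
      Fin.exists_castSucc_eq.2 (Fin.ne_last_of_lt (hj.trans_le (Fin.le_last i)))
    simp [Fin.init]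

theorem Predictable.castSucc {a : Fin (n + 1) → (Fin (n + 1) → G) → G} (ha : Predictable a) :
    Predictable fun (j : Fin n) (y : Fin n → G) => a j.castSucc (Fin.snoc y 0) :=
  fun j y z hyz => ha _ _ _ fun k hk => by
    obtain ⟨k, rfl⟩ :=
      Fin.exists_castSucc_eq.2 (Fin.ne_last_of_lt (hk.trans (Fin.castSucc_lt_last j)))
    simpa using hyz k (Fin.castSucc_lt_castSucc_iff.1 hk)

theorem shear_eq_snoc {a : Fin (n + 1) → (Fin (n + 1) → G) → G} (ha : Predictable a)
    (x : Fin (n + 1) → G) :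
    shear a x = Fin.snoc (shear (fun j y => a j.castSucc (Fin.snoc y 0)) (Fin.init x))
      (x (Fin.last n) - a (Fin.last n) (Fin.snoc (Fin.init x) 0)) := by
  ext i
  refine Fin.lastCases ?_ (fun j => ?_) i
  · simp [shear, ha.apply_snoc_init]
  · simp [shear, ha.apply_snoc_init, Fin.init]

theorem measurable_shear [MeasurableSpace G] [MeasurableSub₂ G]
    {a : Fin n → (Fin n → G) → G} (ha : ∀ i, Measurable (a i)) : Measurable (shear a) :=
  measurable_pi_lambda _ fun i => (measurable_pi_apply i).sub (ha i)

theorem measurePreserving_shear [MeasurableSpace G] [MeasurableSub₂ G] (μ : Measure G)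
    [SigmaFinite μ] [μ.IsAddRightInvariant] :
    ∀ {n : ℕ} {a : Fin n → (Fin n → G) → G}, (∀ i, Measurable (a i)) → Predictable a →
      MeasurePreserving (shear a) (Measure.pi fun _ => μ) (Measure.pi fun _ => μ)
  | 0, a, _, _ => by
    convert MeasurePreserving.id _
  | n + 1, a, hm, ha => by
    have hS : MeasurePreserving (shear fun j y => a j.castSucc (Fin.snoc y 0))
        (Measure.pi fun _ => μ) (Measure.pi fun _ => μ) :=
      measurePreserving_shear μ (fun j => (hm j.castSucc).comp (measurable_snoc_const 0))
        ha.castSucc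
    have hK : MeasurePreserving
        (fun p : (Fin n → G) × G => (shear (fun j y => a j.castSucc (Fin.snoc y 0)) p.1,
          p.2 - a (Fin.last n) (Fin.snoc p.1 0)))
        ((Measure.pi fun _ => μ).prod μ) ((Measure.pi fun _ => μ).prod μ) :=
      hS.skew_product (g := fun y t => t - a (Fin.last n) (Fin.snoc y 0))
        (measurable_snd.sub ((hm _).comp ((measurable_snoc_const 0).comp measurable_fst)))
        (ae_of_all _ fun y => map_sub_right_eq_self μ _)
    have hE := measurePreserving_initLastEquiv (n := n) μ
    convert (hE.symm _).comp (hK.comp hE)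
    ext x : 1
    simp [shear_eq_snoc ha]

end Shear

section Density

variable {α β : Type*} [MeasurableSpace α] [MeasurableSpace β]

theorem map_withDensity_of_measurePreserving {μ : Measure α} {ν : Measure β} {Φ : α → β}
    {Ψ : β → α} (hΦ : Measurable Φ) (hΨ : MeasurePreserving Ψ ν μ) (hΦΨ : ∀ y, Φ (Ψ y) = y)
    {p : α → ℝ≥0∞} (hp : Measurable p) :
    (μ.withDensity p).map Φ = ν.withDensity (p ∘ Ψ) := by
  ext s hs
  rw [Measure.map_apply hΦ hs, withDensity_apply _ (hΦ hs), withDensity_apply _ hs,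
    ← lintegral_indicator (hΦ hs), ← lintegral_indicator hs,
    ← hΨ.lintegral_comp (hp.indicator (hΦ hs))]
  congr with y
  by_cases hy : y ∈ s <;> simp [Set.indicator, hy, hΦΨ]

theorem pi_withDensity (μ : Measure α) [SigmaFinite μ] {f : α → ℝ≥0∞} (hf : Measurable f)
    [SigmaFinite (μ.withDensity f)] :
    ∀ n : ℕ, Measure.pi (fun _ : Fin n => μ.withDensity f) =
      (Measure.pi fun _ => μ).withDensity fun x => ∏ i, f (x i)
  | 0 => by
    simp only [Finset.univ_eq_empty, Finset.prod_empty]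
    rw [← Pi.one_def, withDensity_one, Measure.pi_of_empty, Measure.pi_of_empty]
  | n + 1 => by
    have hE := measurePreserving_initLastEquiv (n := n) μ
    rw [← (measurePreserving_initLastEquiv _).symm _ |>.map_eq, pi_withDensity μ hf n,
      prod_withDensity (by fun_prop) hf,
      map_withDensity_of_measurePreserving (initLastEquiv α n).symm.measurable hE (by simp)
        (by fun_prop)]
    congr with x
    simp [Fin.prod_univ_castSucc, Fin.init]

end Density

section Gaussian

variable {v : ℝ≥0} {n : ℕ}

def gaussianPDFPi (v : ℝ≥0) (x : Fin n → ℝ) : ℝ≥0∞ :=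
  ∏ i, gaussianPDF 0 v (x i)

theorem measurable_gaussianPDFPi (v : ℝ≥0) : Measurable (gaussianPDFPi (n := n) v) := by
  unfold gaussianPDFPi; fun_prop

theorem gaussianPDFPi_ne_zero (hv : v ≠ 0) (x : Fin n → ℝ) : gaussianPDFPi v x ≠ 0 :=
  Finset.prod_ne_zero_iff.2 fun _ _ => (gaussianPDF_pos _ hv _).ne'

theorem gaussianPDFPi_ne_top (x : Fin n → ℝ) : gaussianPDFPi v x ≠ ∞ :=
  ENNReal.prod_ne_top fun _ _ => gaussianPDF_ne_top

theorem pi_gaussianReal_eq_withDensity (hv : v ≠ 0) (n : ℕ) :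
    Measure.pi (fun _ : Fin n => gaussianReal 0 v) = volume.withDensity (gaussianPDFPi v) := by
  have : SigmaFinite (volume.withDensity (gaussianPDF 0 v)) := by
    rw [← gaussianReal_of_var_ne_zero 0 hv]; infer_instance
  simp_rw [gaussianReal_of_var_ne_zero 0 hv]
  exact pi_withDensity volume (measurable_gaussianPDF 0 v) n

theorem lintegral_gaussianPDFPi (hv : v ≠ 0) : ∫⁻ x, gaussianPDFPi (n := n) v x = 1 := by
  have h := congr_arg (· Set.univ) (pi_gaussianReal_eq_withDensity hv n)
  simpa using h.symm

theorem gaussianPDF_mul_div (hv : v ≠ 0) (x a b : ℝ) :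
    gaussianPDF 0 v (x - a) * (gaussianPDF 0 v (x - a) / gaussianPDF 0 v (x - b)) =
      ENNReal.ofReal (exp ((a - b) ^ 2 / v)) * gaussianPDF 0 v (x - (2 * a - b)) := by
  simp only [gaussianPDF]
  rw [← ENNReal.ofReal_div_of_pos (gaussianPDFReal_pos _ _ _ hv),
    ← ENNReal.ofReal_mul (gaussianPDFReal_pos _ _ _ hv).le,
    ← ENNReal.ofReal_mul (exp_pos _).le]
  congr 1
  simp only [gaussianPDFReal_def, sub_zero]
  field_simp
  rw [sq, ← exp_add, ← exp_add, ← exp_add]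
  congr 1
  field_simp
  ring

theorem gaussianPDFPi_mul_div_le (hv : v ≠ 0) {ε : ℝ} (x α β : Fin n → ℝ)
    (hαβ : ∀ i, |α i - β i| ≤ ε) :
    gaussianPDFPi v (x - α) * (gaussianPDFPi v (x - α) / gaussianPDFPi v (x - β)) ≤
      ENNReal.ofReal (exp (ε ^ 2 / v)) ^ n * gaussianPDFPi v (x - fun i => 2 * α i - β i) := by
  simp only [gaussianPDFPi, Pi.sub_apply]
  rw [← ENNReal.prod_div_distrib_of_ne_zero fun i _ => (gaussianPDF_pos _ hv _).ne',
    ← Finset.prod_mul_distrib, ← Fin.prod_const, ← Finset.prod_mul_distrib]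
  refine Finset.prod_le_prod' fun i _ => ?_
  rw [gaussianPDF_mul_div hv]
  gcongr ENNReal.ofReal (exp (?_ / _)) * _
  exact sq_le_sq' (abs_le.1 (hαβ i)).1 (abs_le.1 (hαβ i)).2

theorem lintegral_gaussianPDFPi_shear_mul_div_le (hv : v ≠ 0) {ε : ℝ}
    {a b : Fin n → (Fin n → ℝ) → ℝ} (ha : ∀ i, Measurable (a i)) (hb : ∀ i, Measurable (b i))
    (ha' : Predictable a) (hb' : Predictable b) (hab : ∀ i x, |a i x - b i x| ≤ ε) :
    ∫⁻ x, gaussianPDFPi v (shear a x) *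
        (gaussianPDFPi v (shear a x) / gaussianPDFPi v (shear b x)) ≤
      ENNReal.ofReal (exp (n * ε ^ 2 / v)) := by
  set c : Fin n → (Fin n → ℝ) → ℝ := fun i x => 2 * a i x - b i x
  have hc : MeasurePreserving (shear c) volume volume :=
    measurePreserving_shear volume (fun i => ((ha i).const_mul 2).sub (hb i))
      fun i x y hxy => by simp only [c, ha' i x y hxy, hb' i x y hxy]
  calc _ ≤ ∫⁻ x, ENNReal.ofReal (exp (ε ^ 2 / v)) ^ n * gaussianPDFPi v (shear c x) :=
        lintegral_mono fun x => gaussianPDFPi_mul_div_le hv x _ _ (hab · x)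
    _ = ENNReal.ofReal (exp (ε ^ 2 / v)) ^ n := by
        rw [lintegral_const_mul' _ _ (ENNReal.pow_ne_top ENNReal.ofReal_ne_top),
          hc.lintegral_comp (measurable_gaussianPDFPi v), lintegral_gaussianPDFPi hv, mul_one]
    _ = ENNReal.ofReal (exp (n * ε ^ 2 / v)) := by
        rw [← ENNReal.ofReal_pow (exp_pos _).le, ← exp_nat_mul, mul_div_assoc]

end Gaussian

section ChiSq

variable {α : Type*} [MeasurableSpace α]

theorem lintegral_rnDeriv_withDensity (μ : Measure α) [SigmaFinite μ] {p q : α → ℝ≥0∞}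
    (hp : Measurable p) (hq : Measurable q) (hq0 : ∀ x, q x ≠ 0) (hq_top : ∀ x, q x ≠ ∞) :
    ∫⁻ x, (μ.withDensity p).rnDeriv (μ.withDensity q) x ∂(μ.withDensity p) =
      ∫⁻ x, p x * (p x / q x) ∂μ := by
  have : SigmaFinite (μ.withDensity q) := SigmaFinite.withDensity_of_ne_top (ae_of_all _ hq_top)
  have hpq : μ.withDensity p = (μ.withDensity q).withDensity (p / q) := by
    rw [← withDensity_mul μ hq (hp.div hq)]
    congr with x
    exact (ENNReal.mul_div_cancel (hq0 x) (hq_top x)).symm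
  have hrn : (μ.withDensity p).rnDeriv (μ.withDensity q) =ᵐ[μ.withDensity p] p / q := by
    have hac : μ.withDensity p ≪ μ.withDensity q := hpq ▸ withDensity_absolutelyContinuous _ _
    have h := Measure.rnDeriv_withDensity (μ.withDensity q) (hp.div hq)
    rw [← hpq] at h
    exact hac.ae_le h
  rw [lintegral_congr_ae hrn, lintegral_withDensity_eq_lintegral_mul _ hp (hp.div hq)]
  rfl

theorem chiSq_le_of_lintegral_rnDeriv_le {P Q : Measure α} {C : ℝ} (hC : 0 ≤ C)
    (h : ∫⁻ x, P.rnDeriv Q x ∂P ≤ ENNReal.ofReal C) : chiSq P Q ≤ C - 1 := by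
  unfold chiSq
  gcongr
  rw [integral_eq_lintegral_of_nonneg_ae (ae_of_all _ fun _ => ENNReal.toReal_nonneg)
    (Measure.measurable_rnDeriv P Q).ennreal_toReal.aestronglyMeasurable]
  exact ENNReal.toReal_le_of_le_ofReal hC
    ((lintegral_mono fun _ => ENNReal.ofReal_toReal_le).trans h)

end ChiSq

section Observations

variable {T : ℕ} {fd : ℝ → ℝ} {q : ℕ → (ℕ → ℝ) → ℝ}

/-- The mean `fd(x_i)` of the `i`-th observation, as a function of the earlier observations. -/
def obsMean (fd : ℝ → ℝ) (q : ℕ → (ℕ → ℝ) → ℝ) (i : Fin T) (s : Fin T → ℝ) : ℝ :=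
  fd (q i fun j => if hj : j < i then s ⟨j, hj.trans i.isLt⟩ else 0)

theorem predictable_obsMean (fd : ℝ → ℝ) (q : ℕ → (ℕ → ℝ) → ℝ) :
    Predictable (obsMean (T := T) fd q) := by
  intro i s s' h
  simp only [obsMean]
  congr with j
  split_ifs with hj
  exacts [h _ hj, rfl]

theorem measurable_obsMean (hfd : Measurable fd) (hq : ∀ n, Measurable (q n)) (i : Fin T) :
    Measurable (obsMean fd q i) := by
  refine hfd.comp ((hq i).comp (measurable_pi_lambda _ fun j => ?_))
  split_ifs
  exacts [measurable_pi_apply _, measurable_const]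

theorem obs_eq (ξ : Fin T → ℝ) (n : ℕ) :
    obs T fd q ξ n = fd (q n fun j => if j < n then obs T fd q ξ j else 0) +
      if hn : n < T then ξ ⟨n, hn⟩ else 0 := by
  rw [obs]
  simp only [dite_eq_ite]

theorem measurable_obs (hfd : Measurable fd) (hq : ∀ n, Measurable (q n)) (n : ℕ) :
    Measurable fun ξ : Fin T → ℝ => obs T fd q ξ n := by
  induction n using Nat.strong_induction_on with
  | _ n ih =>
    rw [show (fun ξ : Fin T → ℝ => obs T fd q ξ n) = _ from funext fun ξ => obs_eq ξ n]
    refine (hfd.comp ((hq n).comp (measurable_pi_lambda _ fun j => ?_))).add ?_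
    · split_ifs with hj
      exacts [ih j hj, measurable_const]
    · split_ifs
      exacts [measurable_pi_apply _, measurable_const]

theorem obs_shear_obsMean (s : Fin T → ℝ) (n : ℕ) (hn : n < T) :
    obs T fd q (shear (obsMean fd q) s) n = s ⟨n, hn⟩ := by
  induction n using Nat.strong_induction_on with
  | _ n ih =>
    have hpast : (fun j => if j < n then obs T fd q (shear (obsMean fd q) s) j else 0) =
        fun j => if hj : j < n then s ⟨j, hj.trans hn⟩ else 0 := by
      ext j
      split_ifs with hj
      exacts [ih j hj _, rfl]
    rw [obs_eq, hpast, dif_pos hn, shear, obsMean]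
    ring

theorem seqLaw_eq_withDensity {v : ℝ≥0} (hv : v ≠ 0) (hfd : Measurable fd)
    (hq : ∀ n, Measurable (q n)) :
    seqLaw T v fd q = volume.withDensity fun s => gaussianPDFPi v (shear (obsMean fd q) s) := by
  rw [seqLaw, pi_gaussianReal_eq_withDensity hv]
  exact map_withDensity_of_measurePreserving (Φ := fun ξ (i : Fin T) => obs T fd q ξ i)
    (measurable_pi_lambda _ fun i => measurable_obs hfd hq i)
    (measurePreserving_shear volume (measurable_obsMean hfd hq) (predictable_obsMean fd q))
    (fun s => funext fun i : Fin T => obs_shear_obsMean s i i.isLt)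
    (measurable_gaussianPDFPi v)

end Observations

theorem chiSq_seq_gradients_le_general (T : ℕ) (v : ℝ≥0) (hv : v ≠ 0) (ε : ℝ)
    (fd gd : ℝ → ℝ)
    (hfm : Measurable fd) (hgm : Measurable gd)
    (hκ : ∀ x, |fd x - gd x| ≤ ε)
    (q : ℕ → (ℕ → ℝ) → ℝ) (hq : ∀ n, Measurable (q n)) :
    chiSq (seqLaw T v fd q) (seqLaw T v gd q) ≤
      Real.exp ((T : ℝ) * ε ^ 2 / (v : ℝ)) - 1 := by
  rw [seqLaw_eq_withDensity hv hfm hq, seqLaw_eq_withDensity hv hgm hq]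
  have hpf : Measurable fun s : Fin T → ℝ => gaussianPDFPi v (shear (obsMean fd q) s) :=
    (measurable_gaussianPDFPi v).comp (measurable_shear (measurable_obsMean hfm hq))
  have hpg : Measurable fun s : Fin T → ℝ => gaussianPDFPi v (shear (obsMean gd q) s) :=
    (measurable_gaussianPDFPi v).comp (measurable_shear (measurable_obsMean hgm hq))
  refine chiSq_le_of_lintegral_rnDeriv_le (exp_pos _).le ?_
  refine (lintegral_rnDeriv_withDensity volume hpf hpg (fun _ => gaussianPDFPi_ne_zero hv _)
    (fun _ => gaussianPDFPi_ne_top _)).trans_le ?_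
  exact lintegral_gaussianPDFPi_shear_mul_div_le hv (measurable_obsMean hfm hq)
    (measurable_obsMean hgm hq) (predictable_obsMean fd q) (predictable_obsMean gd q)
    fun _ _ => hκ _

/-- If `sup_x |f'(x) − g'(x)| ≤ ε` (minimal-norm subgradients), then the chi-square
divergence of the joint laws of `T` sequentially queried noisy subgradients satisfies
`χ²(P_f^T ‖ P_g^T) ≤ exp(Tε²/σ²) − 1`. -/
theorem chiSq_seq_gradients_le (T : ℕ) (v : ℝ≥0) (hv : v ≠ 0) (ε : ℝ) (hε : 0 ≤ ε)
    (f g : ℝ → ℝ) (hf : ConvexOn ℝ Set.univ f) (hg : ConvexOn ℝ Set.univ g)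
    (fd gd : ℝ → ℝ) (hfd : fd = minSub f) (hgd : gd = minSub g)
    (hfm : Measurable fd) (hgm : Measurable gd)
    (hκ : ∀ x, |fd x - gd x| ≤ ε)
    (q : ℕ → (ℕ → ℝ) → ℝ) (hq : ∀ n, Measurable (q n)) :
    chiSq (seqLaw T v fd q) (seqLaw T v gd q) ≤
      Real.exp ((T : ℝ) * ε ^ 2 / (v : ℝ)) - 1 :=
  chiSq_seq_gradients_le_general T v hv ε fd gd hfm hgm hκ q hq
end
end

section
/- Binary search per-round guarantee: if x_e ∉ I_δ (i.e., |f'(x_e)| ≥ C_δ/√T₀) and the current interval intersects I_δ, then the probability that the next interval intersects I_δ is at least 1 − (σ/(C_δ√(2π)))·exp(−C_δ²/(2σ²)). -/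
/-!
The average of the `T₀` samples has law `N(f'(m), σ²/T₀)`. As `f'` is monotone, `|f'(m)| ≥ C_δ/√T₀`
and `|f'(y)| < C_δ/√T₀` for some `y ∈ (a, b)`, such a `y` lies left of `m` when `f'(m) > 0` and
right of `m` when `f'(m) < 0`: whenever the average has the sign of its mean, the kept half
meets `I_δ`. The sign is wrong with probability at most `√v φ(μ/√v) / |μ|` (Mills' ratio, `φ` the
standard normal density), which for `|μ| ≥ C_δ/√T₀` and `v = σ²/T₀` is the stated bound.
-/

open MeasureTheory ProbabilityTheory Set
open scoped NNReal Real

lemma pi_gaussianReal_map_sum {ι : Type*} [Fintype ι] (μ : ℝ) (v : ℝ≥0) :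
    (Measure.pi fun _ : ι => gaussianReal μ v).map (fun ω => ∑ i, ω i) =
      gaussianReal (Fintype.card ι * μ) (Fintype.card ι * v) := by
  refine Measure.ext_of_charFun (funext fun t => ?_)
  simp only [charFun_map_sum_pi_eq_prod, Finset.prod_apply, charFun_gaussianReal,
    Finset.prod_const, Finset.card_univ, ← Complex.exp_nat_mul]
  congr 1
  push_cast
  ring

lemma pi_gaussianReal_map_average {n : ℕ} (hn : n ≠ 0) (μ : ℝ) (v : ℝ≥0) :
    (Measure.pi fun _ : Fin n => gaussianReal μ v).map (fun ω => (∑ i, ω i) / (n : ℝ)) =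
      gaussianReal μ (v / n) := by
  have hcomp : (fun ω : Fin n → ℝ => (∑ i, ω i) / (n : ℝ)) =
      (· / (n : ℝ)) ∘ (fun ω => ∑ i, ω i) := rfl
  rw [hcomp, ← Measure.map_map (by fun_prop) (by fun_prop), pi_gaussianReal_map_sum,
    gaussianReal_map_div_const]
  simp only [Fintype.card_fin]
  congr 1
  · field_simp
  · ext; push_cast; field_simp

lemma hasDerivAt_gaussianPDFReal (μ : ℝ) (v : ℝ≥0) (x : ℝ) :
    HasDerivAt (gaussianPDFReal μ v) ((μ - x) * gaussianPDFReal μ v x / v) x := by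
  have hexponent : HasDerivAt (fun y => -(y - μ) ^ 2 / (2 * v)) (-(2 * (x - μ)) / (2 * v)) x := by
    simpa using (((hasDerivAt_id x).sub_const μ).pow 2).neg.div_const (2 * (v : ℝ))
  rw [gaussianPDFReal_def]
  refine (hexponent.exp.const_mul (√(2 * π * v))⁻¹).congr_deriv ?_
  ring

lemma integrable_sub_mul_gaussianPDFReal (μ : ℝ) {v : ℝ≥0} (hv : v ≠ 0) :
    Integrable fun x => (μ - x) * gaussianPDFReal μ v x := by
  have hb : 0 < (2 * (v : ℝ))⁻¹ := by positivity
  refine (((integrable_mul_exp_neg_mul_sq hb).comp_sub_right μ).const_mul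
    (-(√(2 * π * v))⁻¹)).congr (ae_of_all _ fun x => ?_)
  simp only [gaussianPDFReal]
  ring_nf

lemma integral_Iic_sub_mul_gaussianPDFReal (μ : ℝ) {v : ℝ≥0} (hv : v ≠ 0) (a : ℝ) :
    ∫ x in Iic a, (μ - x) * gaussianPDFReal μ v x = v * gaussianPDFReal μ v a := by
  have hderiv : ∀ x ∈ Iic a, HasDerivAt (gaussianPDFReal μ v)
      ((μ - x) * gaussianPDFReal μ v x / v) x := fun x _ => hasDerivAt_gaussianPDFReal μ v x
  have hint := ((integrable_sub_mul_gaussianPDFReal μ hv).div_const (v : ℝ)).integrableOn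
    (s := Iic a)
  have hlim := tendsto_zero_of_hasDerivAt_of_integrableOn_Iic hderiv hint
    (integrable_gaussianPDFReal μ v).integrableOn
  have hftc := integral_Iic_of_hasDerivAt_of_tendsto' hderiv hint hlim
  rw [integral_div, sub_zero, div_eq_iff (by positivity)] at hftc
  rw [hftc, mul_comm]

/-- Mills' ratio: on `Iic a` the density is at most `(μ - x) / (μ - a)` times itself, and
`(μ - x)` times the density is `v` times its derivative. -/
lemma gaussianReal_Iic_le {μ a : ℝ} (ha : a < μ) {v : ℝ≥0} (hv : v ≠ 0) :
    gaussianReal μ v (Iic a) ≤ ENNReal.ofReal (v * gaussianPDFReal μ v a / (μ - a)) := by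
  rw [gaussianReal_apply_eq_integral _ hv, ← integral_Iic_sub_mul_gaussianPDFReal μ hv,
    ← integral_div]
  refine ENNReal.ofReal_le_ofReal (setIntegral_mono_on (integrable_gaussianPDFReal μ v).integrableOn
    ((integrable_sub_mul_gaussianPDFReal μ hv).integrableOn.div_const _) measurableSet_Iic
    fun x hx => ?_)
  rw [le_div_iff₀ (sub_pos.2 ha), mul_comm]
  exact mul_le_mul_of_nonneg_right (by linarith [mem_Iic.1 hx]) (gaussianPDFReal_nonneg μ v x)

lemma gaussianReal_Iic_zero_le {μ c : ℝ} (hc : 0 < c) (hcμ : c ≤ μ) {v : ℝ≥0} (hv : v ≠ 0) :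
    gaussianReal μ v (Iic 0) ≤ ENNReal.ofReal (√v / (c * √(2 * π)) * rexp (-c ^ 2 / (2 * v))) := by
  refine (gaussianReal_Iic_le (hc.trans_le hcμ) hv).trans (ENNReal.ofReal_le_ofReal ?_)
  calc (v : ℝ) * gaussianPDFReal μ v 0 / (μ - 0)
      = √v / (μ * √(2 * π)) * rexp (-μ ^ 2 / (2 * v)) := by
        have hsq : √(v : ℝ) ^ 2 = v := Real.sq_sqrt v.coe_nonneg
        rw [gaussianPDFReal, sub_zero, zero_sub, neg_sq, Real.sqrt_mul (by positivity)]
        field_simp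
        rw [hsq]
    _ ≤ √v / (c * √(2 * π)) * rexp (-c ^ 2 / (2 * v)) := by
        gcongr

lemma gaussianReal_sign_mismatch_le {μ c : ℝ} (hc : 0 < c) (hcμ : c ≤ |μ|) {v : ℝ≥0}
    (hv : v ≠ 0) :
    gaussianReal μ v {x | 0 < x ↔ 0 < μ}ᶜ ≤
      ENNReal.ofReal (√v / (c * √(2 * π)) * rexp (-c ^ 2 / (2 * v))) := by
  rcases lt_or_gt_of_ne (abs_pos.1 (hc.trans_le hcμ)) with hμ | hμ
  · have hset : {x : ℝ | 0 < x ↔ 0 < μ}ᶜ = (fun x => -x) ⁻¹' Iio 0 := by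
      ext x; simp [hμ.not_gt]
    rw [hset, ← Measure.map_apply measurable_neg measurableSet_Iio, gaussianReal_map_neg]
    exact (measure_mono Iio_subset_Iic_self).trans
      (gaussianReal_Iic_zero_le hc (by rwa [abs_of_neg hμ] at hcμ) hv)
  · have hset : {x : ℝ | 0 < x ↔ 0 < μ}ᶜ = Iic 0 := by
      ext x; simp [hμ]
    rw [hset]
    exact gaussianReal_Iic_zero_le hc (by rwa [abs_of_pos hμ] at hcμ) hv

lemma one_sub_le_gaussianReal_sign_match {μ c : ℝ} (hc : 0 < c) (hcμ : c ≤ |μ|) {v : ℝ≥0}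
    (hv : v ≠ 0) :
    ENNReal.ofReal (1 - √v / (c * √(2 * π)) * rexp (-c ^ 2 / (2 * v))) ≤
      gaussianReal μ v {x | 0 < x ↔ 0 < μ} := by
  have hmeas : MeasurableSet {x : ℝ | 0 < x ↔ 0 < μ} := by measurability
  rw [ENNReal.ofReal_sub _ (by positivity), ENNReal.ofReal_one, ← compl_compl {x | 0 < x ↔ 0 < μ},
    prob_compl_eq_one_sub hmeas.compl]
  exact tsub_le_tsub_left (gaussianReal_sign_mismatch_le hc hcμ hv) 1

lemma Monotone.lt_iff_pos_of_abs_lt_abs {α β : Type*} [LinearOrder α]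
    [AddCommGroup β] [LinearOrder β] [IsOrderedAddMonoid β] {f : α → β} (hf : Monotone f)
    {x y : α} (h : |f x| < |f y|) : x < y ↔ 0 < f y := by
  constructor
  · intro hxy
    by_contra! hy
    have := hf hxy.le
    rw [abs_of_nonpos hy, abs_of_nonpos (this.trans hy), neg_lt_neg_iff] at h
    exact h.not_ge this
  · intro hy
    by_contra! hyx
    have := hf hyx
    rw [abs_of_pos hy, abs_of_pos (hy.trans_le this)] at h
    exact h.not_ge this

lemma one_sub_le_pi_gaussianReal_average_sign_match {n : ℕ} (hn : n ≠ 0) {σ : ℝ} (hσ : 0 < σ)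
    {μ C : ℝ} (hC : 0 < C) (hCμ : C / √n ≤ |μ|) :
    ENNReal.ofReal (1 - σ / (C * √(2 * π)) * rexp (-C ^ 2 / (2 * σ ^ 2))) ≤
      (Measure.pi fun _ : Fin n => gaussianReal μ (Real.toNNReal (σ ^ 2)))
        {ω | 0 < (∑ i, ω i) / (n : ℝ) ↔ 0 < μ} := by
  have hn' : (0 : ℝ) < n := by positivity
  have hv : Real.toNNReal (σ ^ 2) / n ≠ 0 :=
    div_ne_zero (by simp [hσ.ne']) (by exact_mod_cast hn)
  have hbound : √(Real.toNNReal (σ ^ 2) / n : ℝ≥0) / (C / √n * √(2 * π)) *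
      rexp (-(C / √n) ^ 2 / (2 * (Real.toNNReal (σ ^ 2) / n : ℝ≥0))) =
      σ / (C * √(2 * π)) * rexp (-C ^ 2 / (2 * σ ^ 2)) := by
    have hvr : ((Real.toNNReal (σ ^ 2) / n : ℝ≥0) : ℝ) = σ ^ 2 / n := by
      simp [Real.coe_toNNReal _ (sq_nonneg σ)]
    rw [hvr, Real.sqrt_div' _ hn'.le, Real.sqrt_sq hσ.le, div_pow, Real.sq_sqrt hn'.le]
    field_simp
  have hset : {ω : Fin n → ℝ | 0 < (∑ i, ω i) / (n : ℝ) ↔ 0 < μ} =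
      (fun ω => (∑ i, ω i) / (n : ℝ)) ⁻¹' {x | 0 < x ↔ 0 < μ} := rfl
  rw [hset, ← Measure.map_apply (by fun_prop) (by measurability), pi_gaussianReal_map_average hn,
    ← hbound]
  exact one_sub_le_gaussianReal_sign_match (by positivity) hCμ hv

theorem binary_search_step_general (σ : ℝ) (hσ : 0 < σ) (T₀ : ℕ) (hT₀ : 1 ≤ T₀)
    (fd : ℝ → ℝ) (hmono : Monotone fd)
    (Cδ : ℝ) (hCδ : 0 < Cδ)
    (Iδ : Set ℝ) (hIδ : Iδ = {y | |fd y| < Cδ / Real.sqrt T₀})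
    (a b : ℝ) (hint : (Ioo a b ∩ Iδ).Nonempty)
    (m : ℝ) (hmout : m ∉ Iδ) :
    (Measure.pi fun _ : Fin T₀ => gaussianReal (fd m) (Real.toNNReal (σ ^ 2)))
      {ω | ((if 0 < (∑ t : Fin T₀, ω t) / T₀ then Ioo a m else Ioo m b) ∩ Iδ).Nonempty} ≥
      ENNReal.ofReal (1 - σ / (Cδ * Real.sqrt (2 * π)) * Real.exp (-Cδ ^ 2 / (2 * σ ^ 2))) := by
  obtain ⟨y, hy, hyI⟩ := hint
  have hyc : |fd y| < Cδ / √T₀ := by rwa [hIδ] at hyI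
  have hc : Cδ / √T₀ ≤ |fd m| := by rw [hIδ] at hmout; exact not_lt.1 hmout
  have hym : y < m ↔ 0 < fd m := hmono.lt_iff_pos_of_abs_lt_abs (hyc.trans_le hc)
  refine le_trans (one_sub_le_pi_gaussianReal_average_sign_match (by omega) hσ hCδ hc)
    (measure_mono fun ω (hω : _ ↔ _) => ?_)
  show (_ ∩ Iδ).Nonempty
  split_ifs with h
  · exact ⟨y, ⟨hy.1, hym.2 (hω.1 h)⟩, hyI⟩
  · have hmy : m ≤ y := not_lt.1 fun hyl => h (hω.2 (hym.1 hyl))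
    exact ⟨y, ⟨hmy.lt_of_ne (by rintro rfl; exact hmout hyI), hy.2⟩, hyI⟩

/-- Binary search per-round guarantee: if the current interval `(a,b)` intersects
`I_δ = {y : |f'(y)| < C_δ/√T₀}` but the midpoint `m = (a+b)/2` does not belong to `I_δ`,
then the next half-interval (chosen by the sign of the average of `T₀` i.i.d.
`N(f'(m), σ²)` observations) intersects `I_δ` with probability at least
`1 − (σ/(C_δ√(2π)))·exp(−C_δ²/(2σ²))`. -/
theorem binary_search_step (σ : ℝ) (hσ : 0 < σ) (T₀ : ℕ) (hT₀ : 1 ≤ T₀)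
    (fd : ℝ → ℝ) (hmono : Monotone fd)
    (Cδ : ℝ) (hCδ : 0 < Cδ)
    (Iδ : Set ℝ) (hIδ : Iδ = {y | |fd y| < Cδ / Real.sqrt T₀})
    (a b : ℝ) (hab : a < b) (hint : (Ioo a b ∩ Iδ).Nonempty)
    (m : ℝ) (hm : m = (a + b) / 2) (hmout : m ∉ Iδ) :
    (Measure.pi fun _ : Fin T₀ => gaussianReal (fd m) (Real.toNNReal (σ ^ 2)))
      {ω | ((if 0 < (∑ t : Fin T₀, ω t) / T₀ then Ioo a m else Ioo m b) ∩ Iδ).Nonempty} ≥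
      ENNReal.ofReal (1 - σ / (Cδ * Real.sqrt (2 * π)) * Real.exp (-Cδ ^ 2 / (2 * σ ^ 2))) :=
  binary_search_step_general σ hσ T₀ hT₀ fd hmono Cδ hCδ Iδ hIδ a b hint m hmout
end

section
/- Continuity of the modulus under tilting: let f satisfy the polynomial local growth expansion with k_r ≥ k_l (and λ_r ≥ λ_l if k_r = k_l). Define g(x) = f(x) − εx. Then for any constants c < 1 < C, for all sufficiently small ε > 0, ω_g(cε) ≤ (2C)^{1/(k_r−1)}·(ε/λ_r)^{1/(k_r−1)} ≤ e·(2C²)^{1/(k_r−1)}·ω_f(ε). -/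
noncomputable section
open Set Filter
open scoped Classical

/-- Subdifferential of `f` at `x` relative to the domain `[a,b]`. -/
def subD (a b : ℝ) (f : ℝ → ℝ) (x : ℝ) : Set ℝ :=
  {s | ∀ z ∈ Icc a b, f x + s * (z - x) ≤ f z}

/-- The minimal-norm subgradient of `f` at `x` (projection of `0` onto `∂f(x)`). -/
noncomputable def minSubD (a b : ℝ) (f : ℝ → ℝ) (x : ℝ) : ℝ :=
  if (0 : ℝ) ∈ subD a b f x then 0
  else if ∀ s ∈ subD a b f x, 0 < s then sInf (subD a b f x)
  else sSup (subD a b f x)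

/-- `κ(f,g) = sup_x |f'(x) - g'(x)|` over the domain, with minimal-norm subgradients. -/
noncomputable def kappaD (a b : ℝ) (f g : ℝ → ℝ) : ℝ :=
  sSup {r | ∃ x ∈ Icc a b, r = |minSubD a b f x - minSubD a b g x|}

/-- Minimizers of `f` over `[a,b]`. -/
def argminD (a b : ℝ) (f : ℝ → ℝ) : Set ℝ :=
  {x ∈ Icc a b | ∀ z ∈ Icc a b, f x ≤ f z}

/-- `d(f,g)`: distance between the minimizer sets of `f` and `g`. -/
noncomputable def dD (a b : ℝ) (f g : ℝ → ℝ) : ℝ :=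
  sInf {r | ∃ x ∈ argminD a b f, ∃ y ∈ argminD a b g, r = |x - y|}

/-- The modulus of continuity `ω_f(ε) = sup {d(f,g) : g convex Lipschitz, κ(f,g) ≤ ε}`. -/
noncomputable def omegaD (a b : ℝ) (f : ℝ → ℝ) (ε : ℝ) : ℝ :=
  sSup {r | ∃ g : ℝ → ℝ, ConvexOn ℝ (Icc a b) g ∧ (∃ L, LipschitzOnWith L g (Icc a b)) ∧
    kappaD a b f g ≤ ε ∧ r = dD a b f g}

/-!
Tilting by `ε` shifts every subdifferential by `ε`, so the minimizers of `g = f - ε x` are the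
points where `ε ∈ ∂f`, and it moves each minimal-norm subgradient by at most `ε`, so
`κ(f, g) ≤ ε` and `d(f, g) ≤ ω_f(ε)`. Near the right end `x_r` of `argmin f` we have
`f (x_r + δ) - f x_r ≈ λ δ ^ k`.

Upper bound: comparing secants, a point carrying a subgradient `σ ∈ (0, 2ε]` lies within
`(2 C ε / λ) ^ (1 / (k - 1))` to the right of `x_r`. If `κ(g, h) ≤ c ε`, then `g` has a
subgradient of size at most `c ε` at a minimizer of `h`, so both that point and a minimizer of
`g` lie in this window.

Lower bound: if `ε ∈ ∂f(y)` with `y = x_r + p B`, `B = (ε / λ) ^ (1 / (k - 1))`, the subgradient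
inequality at `x_r + k ^ (-1 / (k - 1)) B` forces `ψ p` to be close to the maximum of
`ψ p = p - p ^ k`, so `p ≥ q` for any fixed `q < k ^ (-1 / (k - 1))`. Since
`k ^ (-1 / (k - 1)) ≥ e⁻¹`, the choice `q = e⁻¹ C ^ (-1 / (k - 1))` works.
-/

open Topology

section Subgradient

variable {a b x : ℝ} {f : ℝ → ℝ}

lemma ordConnected_subD : (subD a b f x).OrdConnected := by
  refine ⟨fun s₁ h₁ s₂ h₂ s hs z hz => ?_⟩
  rcases le_total z x with hzx | hxz
  · nlinarith [h₁ z hz, hs.1]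
  · nlinarith [h₂ z hz, hs.2]

lemma isClosed_subD : IsClosed (subD a b f x) := by
  simp only [subD, ofPred_forall]
  exact isClosed_iInter fun z => isClosed_iInter fun _ =>
    isClosed_le (by fun_prop) continuous_const

lemma abs_slope_le_of_lipschitzOnWith {L : NNReal} (hL : LipschitzOnWith L f (Icc a b))
    (hx : x ∈ Icc a b) {y : ℝ} (hy : y ∈ Icc a b) (hyx : y ≠ x) : |slope f x y| ≤ L := by
  have h := lipschitzOnWith_iff_dist_le_mul.1 hL y hy x hx
  rw [Real.dist_eq, Real.dist_eq] at h
  rw [slope_def_field, abs_div, div_le_iff₀ (abs_pos.2 (sub_ne_zero.2 hyx))]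
  exact h

/-- The supremum of the left difference quotients (and of `-L`, for the left endpoint) is a
subgradient. -/
lemma exists_mem_subD_abs_le {L : NNReal} (hconv : ConvexOn ℝ (Icc a b) f)
    (hL : LipschitzOnWith L f (Icc a b)) (hx : x ∈ Icc a b) :
    ∃ s ∈ subD a b f x, |s| ≤ L := by
  set T := insert (-(L : ℝ)) (slope f x '' Ico a x)
  have hTL : ∀ t ∈ T, t ≤ L := by
    rintro t (rfl | ⟨y, hy, rfl⟩)
    · simp
    · exact (le_abs_self _).trans
        (abs_slope_le_of_lipschitzOnWith hL hx ⟨hy.1, hy.2.le.trans hx.2⟩ hy.2.ne)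
  have hTbdd : BddAbove T := ⟨L, hTL⟩
  have hTne : T.Nonempty := insert_nonempty _ _
  refine ⟨sSup T, fun z hz => ?_,
    abs_le.2 ⟨le_csSup hTbdd (mem_insert _ _), csSup_le hTne hTL⟩⟩
  rcases lt_trichotomy z x with hzx | rfl | hxz
  · have h := le_csSup hTbdd (mem_insert_of_mem _ ⟨z, ⟨hz.1, hzx⟩, rfl⟩)
    rw [slope_def_field, div_le_iff_of_neg (sub_neg.2 hzx)] at h
    linarith
  · simp
  · have h : sSup T ≤ slope f x z := by
      refine csSup_le hTne ?_
      rintro t (rfl | ⟨y, hy, rfl⟩)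
      · exact neg_le_of_abs_le (abs_slope_le_of_lipschitzOnWith hL hx hz hxz.ne')
      · exact hconv.slope_mono hx ⟨⟨hy.1, hy.2.le.trans hx.2⟩, hy.2.ne⟩ ⟨hz, hxz.ne'⟩
          (hy.2.trans hxz).le
    rw [slope_def_field, le_div_iff₀ (sub_pos.2 hxz)] at h
    linarith

lemma nonpos_of_mem_subD_of_zero_notMem {s₀ : ℝ} (h0 : (0 : ℝ) ∉ subD a b f x)
    (hs₀ : s₀ ∈ subD a b f x) (hs₀0 : s₀ ≤ 0) {s : ℝ} (hs : s ∈ subD a b f x) : s ≤ 0 := by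
  by_contra! hpos
  exact h0 (ordConnected_subD.out hs₀ hs ⟨hs₀0, hpos.le⟩)

lemma subD_nonempty {L : NNReal} (hconv : ConvexOn ℝ (Icc a b) f)
    (hL : LipschitzOnWith L f (Icc a b)) (hx : x ∈ Icc a b) : (subD a b f x).Nonempty :=
  let ⟨s, hs, _⟩ := exists_mem_subD_abs_le hconv hL hx; ⟨s, hs⟩

lemma minSubD_mem (hne : (subD a b f x).Nonempty) : minSubD a b f x ∈ subD a b f x := by
  unfold minSubD
  split_ifs with h0 hpos
  · exact h0
  · exact isClosed_subD.csInf_mem hne ⟨0, fun s hs => (hpos s hs).le⟩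
  · push Not at hpos
    obtain ⟨s₁, hs₁, hs₁0⟩ := hpos
    exact isClosed_subD.csSup_mem hne
      ⟨0, fun s hs => nonpos_of_mem_subD_of_zero_notMem h0 hs₁ hs₁0 hs⟩

lemma abs_minSubD_le {s : ℝ} (hs : s ∈ subD a b f x) : |minSubD a b f x| ≤ |s| := by
  have hmem := minSubD_mem ⟨s, hs⟩
  unfold minSubD at hmem ⊢
  split_ifs at hmem ⊢ with h0 hpos
  · simp
  · rw [abs_of_pos (hpos _ hmem), abs_of_pos (hpos s hs)]
    exact csInf_le ⟨0, fun s hs => (hpos s hs).le⟩ hs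
  · push Not at hpos
    obtain ⟨s₁, hs₁, hs₁0⟩ := hpos
    have hnonpos := fun s (hs : s ∈ subD a b f x) =>
      nonpos_of_mem_subD_of_zero_notMem h0 hs₁ hs₁0 hs
    rw [abs_of_nonpos (hnonpos _ hmem), abs_of_nonpos (hnonpos s hs), neg_le_neg_iff]
    exact le_csSup ⟨0, hnonpos⟩ hs

lemma abs_minSubD_le_of_lipschitzOnWith {L : NNReal} (hconv : ConvexOn ℝ (Icc a b) f)
    (hL : LipschitzOnWith L f (Icc a b)) (hx : x ∈ Icc a b) : |minSubD a b f x| ≤ L := by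
  obtain ⟨s, hs, hsL⟩ := exists_mem_subD_abs_le hconv hL hx
  exact (abs_minSubD_le hs).trans hsL

lemma mem_subD_tilt_iff {ε s : ℝ} :
    s ∈ subD a b (fun y => f y - ε * y) x ↔ s + ε ∈ subD a b f x :=
  forall₂_congr fun z _ => by constructor <;> intro h <;> linarith

lemma zero_mem_subD_of_mem_argminD (hx : x ∈ argminD a b f) : (0 : ℝ) ∈ subD a b f x :=
  fun z hz => by simpa using hx.2 z hz

lemma minSubD_eq_zero_of_mem_argminD (hx : x ∈ argminD a b f) : minSubD a b f x = 0 :=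
  if_pos (zero_mem_subD_of_mem_argminD hx)

lemma argminD_nonempty (hab : a ≤ b) (hf : ContinuousOn f (Icc a b)) :
    (argminD a b f).Nonempty := by
  obtain ⟨x, hx, hmin⟩ := isCompact_Icc.exists_isMinOn (nonempty_Icc.2 hab) hf
  exact ⟨x, hx, hmin⟩

end Subgradient

/-- Nearest-point projection onto an interval of `ℝ` is monotone and `1`-Lipschitz. -/
lemma Set.OrdConnected.le_and_le_add_of_nearest {S : Set ℝ} (hS : S.OrdConnected)
    {x y u w : ℝ} (hxy : x ≤ y) (hu : u ∈ S) (hw : w ∈ S)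
    (hu_near : ∀ s ∈ S, |u - x| ≤ |s - x|) (hw_near : ∀ s ∈ S, |w - y| ≤ |s - y|) :
    u ≤ w ∧ w ≤ u + (y - x) := by
  constructor
  · by_contra! hwu
    have h₁ := hu_near w hw
    have h₂ := hw_near u hu
    rcases lt_or_ge x w with hxw | hwx
    · rw [abs_of_pos (by linarith), abs_of_pos (by linarith)] at h₁
      linarith
    rcases le_or_gt u y with huy | hyu
    · rw [abs_of_neg (by linarith), abs_of_nonpos (by linarith)] at h₂
      linarith
    · have hx := hu_near x (hS.out hw hu ⟨hwx, by linarith⟩)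
      rw [sub_self, abs_zero, abs_nonpos_iff, sub_eq_zero] at hx
      linarith
  · by_contra! hwu
    rcases lt_or_ge x u with hxu | hux
    · have h := hw_near (u + (y - x)) (hS.out hu hw ⟨by linarith, hwu.le⟩)
      rw [abs_of_pos (by linarith), abs_of_pos (by linarith)] at h
      linarith
    rcases le_or_gt x w with hxw | hwx
    · have hx := hu_near x (hS.out hu hw ⟨hux, hxw⟩)
      rw [sub_self, abs_zero, abs_nonpos_iff, sub_eq_zero] at hx
      have hy := hw_near y (hS.out hu hw ⟨by linarith, by linarith⟩)
      rw [sub_self, abs_zero, abs_nonpos_iff, sub_eq_zero] at hy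
      linarith
    · have h := hu_near (w - (y - x)) (hS.out hu hw ⟨by linarith, by linarith⟩)
      rw [abs_of_nonpos (by linarith), abs_of_nonpos (by linarith)] at h
      linarith

section Modulus

variable {a b ε : ℝ} {f g : ℝ → ℝ}

lemma ConvexOn.tilt (hf : ConvexOn ℝ (Icc a b) f) (ε : ℝ) :
    ConvexOn ℝ (Icc a b) (fun x => f x - ε * x) :=
  hf.sub ((LinearMap.mul ℝ ℝ ε).concaveOn (convex_Icc a b))

lemma LipschitzOnWith.tilt {L : NNReal} (hf : LipschitzOnWith L f (Icc a b)) (ε : ℝ) :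
    LipschitzOnWith (L + ‖ε‖₊) (fun x => f x - ε * x) (Icc a b) :=
  hf.sub (lipschitzWith_smul ε).lipschitzOnWith

lemma abs_sub_le_kappaD {Lf Lg : NNReal} (hf : ConvexOn ℝ (Icc a b) f)
    (hLf : LipschitzOnWith Lf f (Icc a b)) (hg : ConvexOn ℝ (Icc a b) g)
    (hLg : LipschitzOnWith Lg g (Icc a b)) {x : ℝ} (hx : x ∈ Icc a b) :
    |minSubD a b f x - minSubD a b g x| ≤ kappaD a b f g := by
  refine le_csSup ⟨Lf + Lg, ?_⟩ ⟨x, hx, rfl⟩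
  rintro r ⟨y, hy, rfl⟩
  exact (abs_sub _ _).trans (add_le_add (abs_minSubD_le_of_lipschitzOnWith hf hLf hy)
    (abs_minSubD_le_of_lipschitzOnWith hg hLg hy))

/-- `minSubD a b f x` and `minSubD a b (fun x => f x - ε * x) x + ε` are the projections of `0`
and of `ε` onto `subD a b f x`. -/
lemma kappaD_tilt_le {L : NNReal} (hf : ConvexOn ℝ (Icc a b) f)
    (hL : LipschitzOnWith L f (Icc a b)) (hε : 0 ≤ ε) :
    kappaD a b f (fun x => f x - ε * x) ≤ ε := by
  refine Real.sSup_le ?_ hε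
  rintro r ⟨x, hx, rfl⟩
  have hu := minSubD_mem (subD_nonempty hf hL hx)
  have hv := minSubD_mem (subD_nonempty (hf.tilt ε) (hL.tilt ε) hx)
  have hw_near : ∀ t ∈ subD a b f x, |minSubD a b (fun y => f y - ε * y) x + ε - ε| ≤ |t - ε| :=
    fun t ht => by
      rw [add_sub_cancel_right]
      exact abs_minSubD_le (mem_subD_tilt_iff.2 (by rwa [sub_add_cancel]))
  obtain ⟨h₁, h₂⟩ := ordConnected_subD.le_and_le_add_of_nearest hε hu
    (mem_subD_tilt_iff.1 hv) (fun t ht => by simpa using abs_minSubD_le ht) hw_near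
  rw [abs_le]
  constructor <;> linarith

lemma dD_le_abs_sub {x y : ℝ} (hx : x ∈ argminD a b f) (hy : y ∈ argminD a b g) :
    dD a b f g ≤ |x - y| :=
  csInf_le ⟨0, by rintro r ⟨x, -, y, -, rfl⟩; exact abs_nonneg _⟩ ⟨x, hx, y, hy, rfl⟩

lemma le_dD {r x y : ℝ} (hx : x ∈ argminD a b f) (hy : y ∈ argminD a b g)
    (h : ∀ x ∈ argminD a b f, ∀ y ∈ argminD a b g, r ≤ |x - y|) : r ≤ dD a b f g :=
  le_csInf ⟨_, x, hx, y, hy, rfl⟩ (by rintro r ⟨x, hx, y, hy, rfl⟩; exact h x hx y hy)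

lemma dD_le_sub (hab : a ≤ b) : dD a b f g ≤ b - a := by
  obtain hempty | ⟨_, x, hx, y, hy, rfl⟩ :=
    eq_empty_or_nonempty {r | ∃ x ∈ argminD a b f, ∃ y ∈ argminD a b g, r = |x - y|}
  · rw [dD, hempty, Real.sInf_empty]
    linarith
  · exact (dD_le_abs_sub hx hy).trans
      (by simpa [Real.dist_eq] using Real.dist_le_of_mem_Icc hx.1 hy.1)

lemma le_omegaD {L : NNReal} (hab : a ≤ b) (hg : ConvexOn ℝ (Icc a b) g)
    (hL : LipschitzOnWith L g (Icc a b)) (hκ : kappaD a b f g ≤ ε) :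
    dD a b f g ≤ omegaD a b f ε :=
  le_csSup ⟨b - a, by rintro r ⟨g, -, -, -, rfl⟩; exact dD_le_sub hab⟩ ⟨g, hg, ⟨L, hL⟩, hκ, rfl⟩

lemma omegaD_le {r : ℝ} (hr : 0 ≤ r)
    (h : ∀ g, ConvexOn ℝ (Icc a b) g → (∃ L, LipschitzOnWith L g (Icc a b)) →
      kappaD a b f g ≤ ε → dD a b f g ≤ r) :
    omegaD a b f ε ≤ r :=
  Real.sSup_le (by rintro r ⟨g, hg, hL, hκ, rfl⟩; exact h g hg hL hκ) hr

end Modulus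

section Growth

variable {a b x₀ y σ k : ℝ} {f : ℝ → ℝ}

lemma le_of_mem_subD_of_pos (hx₀ : x₀ ∈ argminD a b f) (hy : y ∈ Icc a b)
    (hσ : σ ∈ subD a b f y) (hσ0 : 0 < σ) : x₀ ≤ y := by
  by_contra! hyx
  nlinarith [hσ x₀ hx₀.1, hx₀.2 y hy]

lemma sub_le_mul_of_mem_subD (hconv : ConvexOn ℝ (Icc a b) f) (hx₀ : x₀ ∈ Icc a b)
    (hy : y ∈ Icc a b) (hσ : σ ∈ subD a b f y) {x : ℝ} (hx₀x : x₀ < x) (hxy : x ≤ y) :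
    f x - f x₀ ≤ σ * (x - x₀) := by
  have hx : x ∈ Icc a b := ⟨hx₀.1.trans hx₀x.le, hxy.trans hy.2⟩
  have hyx₀ : 0 < y - x₀ := by linarith
  refine (div_le_iff₀ (sub_pos.2 hx₀x)).1 ?_
  calc (f x - f x₀) / (x - x₀) ≤ (f y - f x₀) / (y - x₀) :=
        hconv.secant_mono hx₀ hx hy hx₀x.ne' (hx₀x.trans_le hxy).ne' hxy
    _ ≤ σ := (div_le_iff₀ hyx₀).2 (by linarith [hσ x₀ hx₀])

/-- Comparing secants from `x₀`, `μ δ ^ (k - 1) ≤ σ` for every `δ ≤ y - x₀` in the growth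
window. -/
lemma sub_le_rpow_of_mem_subD (hconv : ConvexOn ℝ (Icc a b) f) (hx₀ : x₀ ∈ argminD a b f)
    (hy : y ∈ Icc a b) (hσ : σ ∈ subD a b f y) {s μ δ₀ : ℝ} (hσs : σ ≤ s) (hs : 0 ≤ s)
    (hk : 1 < k) (hμ : 0 < μ) (hlow : ∀ δ ∈ Ioo 0 δ₀, μ * δ ^ k ≤ f (x₀ + δ) - f x₀)
    (hR : (s / μ) ^ (1 / (k - 1)) < δ₀) : y - x₀ ≤ (s / μ) ^ (1 / (k - 1)) := by
  set R := (s / μ) ^ (1 / (k - 1))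
  by_contra! hRy
  have hR0 : 0 ≤ R := by positivity
  set δ := min (y - x₀) ((R + δ₀) / 2)
  have hRδ : R < δ := lt_min hRy (by linarith)
  have hδ0 : 0 < δ := hR0.trans_lt hRδ
  have hδy : δ ≤ y - x₀ := min_le_left _ _
  have hδδ₀ : δ < δ₀ := (min_le_right _ _).trans_lt (by linarith)
  have hup := sub_le_mul_of_mem_subD hconv hx₀.1 hy hσ (lt_add_of_pos_right x₀ hδ0)
    (by linarith)
  have hlow' := hlow δ ⟨hδ0, hδδ₀⟩
  rw [add_sub_cancel_left] at hup
  rw [← sub_add_cancel k 1, Real.rpow_add_one hδ0.ne'] at hlow'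
  have hpow : δ ^ (k - 1) ≤ s / μ := by
    rw [le_div_iff₀ hμ]
    refine le_of_mul_le_mul_right ?_ hδ0
    nlinarith [mul_le_mul_of_nonneg_right hσs hδ0.le]
  have hδR : δ ≤ R := by
    simpa only [R, one_div] using
      (Real.le_rpow_inv_iff_of_pos hδ0.le (by positivity) (by linarith)).2 hpow
  linarith

/-- The subgradient inequality between `y = x₀ + p B` and `x₀ + t B`, rescaled by
`lam * B ^ k = ε * B`, gives `ψ t - ψ p ≤ 2 η` for `ψ p = p - p ^ k`. -/
lemma mul_le_sub_of_mem_subD (hx₀ : x₀ ∈ argminD a b f) (hy : y ∈ Icc a b)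
    {ε lam η δ₀ B t q : ℝ} (hε : ε ∈ subD a b f y) (hε0 : 0 < ε) (hk : 0 ≤ k) (hη : 0 ≤ η)
    (hgrowth : ∀ δ ∈ Ico 0 δ₀, |f (x₀ + δ) - f x₀ - lam * δ ^ k| ≤ η * lam * δ ^ k)
    (hB : 0 < B) (hscale : lam * B ^ k = ε * B) (hBδ₀ : B < δ₀) (hBb : x₀ + B ≤ b)
    (ht0 : 0 ≤ t) (ht1 : t ≤ 1) (hq1 : q ≤ 1)
    (hgap : ∀ p ∈ Ico 0 q, 2 * η < (t - t ^ k) - (p - p ^ k)) : q * B ≤ y - x₀ := by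
  have hxy := le_of_mem_subD_of_pos hx₀ hy hε hε0
  by_contra! hlt
  set p := (y - x₀) / B
  have hp0 : 0 ≤ p := div_nonneg (sub_nonneg.2 hxy) hB.le
  have hpq : p < q := (div_lt_iff₀ hB).2 hlt
  have hyp : y = x₀ + p * B := by simp only [p]; field_simp; ring
  have htB : t * B ≤ B := mul_le_of_le_one_left hB.le ht1
  have hpB : p * B ≤ B := mul_le_of_le_one_left hB.le (by linarith)
  have hsub := hε (x₀ + t * B) ⟨by nlinarith [hx₀.1.1], by linarith⟩
  have hup := (abs_le.1 (hgrowth (t * B) ⟨by positivity, by linarith⟩)).2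
  have hlow := (abs_le.1 (hgrowth (p * B) ⟨by positivity, by linarith⟩)).1
  rw [Real.mul_rpow ht0 hB.le] at hup
  rw [Real.mul_rpow hp0 hB.le] at hlow
  rw [hyp] at hsub
  have key : ε * B * ((t - t ^ k) - (p - p ^ k)) ≤ ε * B * (η * (t ^ k + p ^ k)) := by
    linear_combination hsub + hup + hlow + (η * t ^ k + η * p ^ k + t ^ k - p ^ k) * hscale
  have hψ := le_of_mul_le_mul_left key (mul_pos hε0 hB)
  have htk : t ^ k ≤ 1 := Real.rpow_le_one ht0 ht1 hk
  have hpk : p ^ k ≤ 1 := Real.rpow_le_one hp0 (by linarith) hk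
  nlinarith [hgap p ⟨hp0, hpq⟩]

end Growth

section RealFacts

variable {k : ℝ}

lemma rpow_one_div_sub_one_rpow (hk : 1 < k) {x : ℝ} (hx : 0 ≤ x) :
    (x ^ (1 / (k - 1))) ^ k = x * x ^ (1 / (k - 1)) := by
  have hk1 : k - 1 ≠ 0 := by linarith
  rw [← Real.rpow_mul hx, show 1 / (k - 1) * k = 1 + 1 / (k - 1) by field_simp; ring,
    Real.rpow_add' hx (by positivity), Real.rpow_one]

/-- `k ^ (-(1 / (k - 1)))` is the maximizer of `p ↦ p - p ^ k`. -/
lemma strictMonoOn_sub_rpow (hk : 1 < k) :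
    StrictMonoOn (fun p : ℝ => p - p ^ k) (Icc 0 (k ^ (-(1 / (k - 1))))) := by
  have hk0 : 0 < k := by linarith
  refine strictMonoOn_of_deriv_pos (convex_Icc _ _)
    (continuous_id.sub (Real.continuous_rpow_const hk0.le)).continuousOn fun p hp => ?_
  rw [interior_Icc] at hp
  have hd : HasDerivAt (fun p : ℝ => p - p ^ k) (1 - k * p ^ (k - 1)) p :=
    (hasDerivAt_id' p).sub (Real.hasDerivAt_rpow_const (.inl hp.1.ne'))
  rw [hd.deriv]
  have hmax : (k ^ (-(1 / (k - 1)))) ^ (k - 1) = k⁻¹ := by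
    have hk1 : k - 1 ≠ 0 := by linarith
    rw [← Real.rpow_mul hk0.le, show -(1 / (k - 1)) * (k - 1) = -1 by field_simp,
      Real.rpow_neg_one]
  have hlt := Real.rpow_lt_rpow hp.1.le hp.2 (sub_pos.2 hk)
  rw [hmax] at hlt
  have := mul_lt_mul_of_pos_left hlt hk0
  rw [mul_inv_cancel₀ hk0.ne'] at this
  linarith

lemma inv_exp_one_le_rpow (hk : 1 < k) : (Real.exp 1)⁻¹ ≤ k ^ (-(1 / (k - 1))) := by
  rw [Real.rpow_def_of_pos (by linarith), ← Real.exp_neg, Real.exp_le_exp, mul_neg,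
    neg_le_neg_iff, mul_one_div, div_le_one (by linarith)]
  exact Real.log_le_sub_one_of_pos (by linarith)

lemma eventually_rpow_lt {g : ℝ → ℝ} (hg : Continuous g) (hg0 : g 0 = 0) {e δ : ℝ}
    (he : 0 < e) (hδ : 0 < δ) : ∀ᶠ ε in 𝓝 0, g ε ^ e < δ := by
  have h : Tendsto (fun ε => g ε ^ e) (𝓝 0) (𝓝 0) := by
    simpa [hg0, Real.zero_rpow he.ne'] using (hg.rpow_const fun _ => .inr he.le).tendsto 0
  exact h.eventually (gt_mem_nhds hδ)

end RealFacts

section Tilting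

variable {a b x₀ k lam : ℝ} {f : ℝ → ℝ} {L : NNReal}

lemma exists_growth_window {η : ℝ}
    (hgrowth : Tendsto (fun δ => (f (x₀ + δ) - f x₀ - lam * δ ^ k) / δ ^ k) (𝓝[>] 0) (𝓝 0))
    (hk : k ≠ 0) (hlam : 0 < lam) (hη : 0 < η) :
    ∃ δ₀ > 0, ∀ δ ∈ Ico 0 δ₀, |f (x₀ + δ) - f x₀ - lam * δ ^ k| ≤ η * lam * δ ^ k := by
  obtain ⟨δ₀, hδ₀, hsub⟩ :=
    mem_nhdsGT_iff_exists_Ioo_subset.1 (Metric.tendsto_nhds.1 hgrowth _ (mul_pos hη hlam))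
  refine ⟨δ₀, hδ₀, fun δ ⟨hδ0, hδ⟩ => ?_⟩
  rcases hδ0.eq_or_lt with rfl | hδpos
  · simp [Real.zero_rpow hk]
  · have h : |f (x₀ + δ) - f x₀ - lam * δ ^ k| / |δ ^ k| < η * lam := by
      simpa [Real.dist_0_eq_abs] using hsub ⟨hδpos, hδ⟩
    rw [abs_of_pos (Real.rpow_pos_of_pos hδpos k), div_lt_iff₀ (by positivity)] at h
    exact h.le

lemma omegaD_tilt_le (hconv : ConvexOn ℝ (Icc a b) f) (hL : LipschitzOnWith L f (Icc a b))
    (hx₀ : x₀ ∈ argminD a b f) (hk : 1 < k) {μ δ₀ ε c : ℝ} (hμ : 0 < μ)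
    (hlow : ∀ δ ∈ Ioo 0 δ₀, μ * δ ^ k ≤ f (x₀ + δ) - f x₀) (hε : 0 < ε) (hc : c < 1)
    (hR : (2 * ε / μ) ^ (1 / (k - 1)) < δ₀) :
    omegaD a b (fun x => f x - ε * x) (c * ε) ≤ (2 * ε / μ) ^ (1 / (k - 1)) := by
  set R := (2 * ε / μ) ^ (1 / (k - 1))
  have hab : a ≤ b := hx₀.1.1.trans hx₀.1.2
  have hloc : ∀ y ∈ Icc a b, ∀ σ ∈ subD a b f y, 0 < σ → σ ≤ 2 * ε → y ∈ Icc x₀ (x₀ + R) :=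
    fun y hy σ hσ hσ0 hσε => ⟨le_of_mem_subD_of_pos hx₀ hy hσ hσ0, by
      linarith [sub_le_rpow_of_mem_subD hconv hx₀ hy hσ hσε (by positivity) hk hμ hlow hR]⟩
  obtain ⟨xg, hxg⟩ := argminD_nonempty hab (hL.tilt ε).continuousOn
  have hxg_loc := hloc xg hxg.1 ε
    (by simpa using mem_subD_tilt_iff.1 (zero_mem_subD_of_mem_argminD hxg)) hε (by linarith)
  refine omegaD_le (by positivity) fun h hh ⟨Lh, hLh⟩ hκ => ?_
  obtain ⟨y, hy⟩ := argminD_nonempty hab hLh.continuousOn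
  have hv : |minSubD a b (fun x => f x - ε * x) y| ≤ c * ε := by
    simpa [minSubD_eq_zero_of_mem_argminD hy] using
      (abs_sub_le_kappaD (hconv.tilt ε) (hL.tilt ε) hh hLh hy.1).trans hκ
  obtain ⟨hv₁, hv₂⟩ := abs_le.1 hv
  have hy_loc := hloc y hy.1 _ (mem_subD_tilt_iff.1
    (minSubD_mem (subD_nonempty (hconv.tilt ε) (hL.tilt ε) hy.1))) (by nlinarith)
    (by nlinarith)
  calc dD a b _ h ≤ |xg - y| := dD_le_abs_sub hxg hy
    _ ≤ R := by simpa [Real.dist_eq] using Real.dist_le_of_mem_Icc hxg_loc hy_loc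

lemma le_omegaD_of_forall_argminD (hconv : ConvexOn ℝ (Icc a b) f)
    (hL : LipschitzOnWith L f (Icc a b)) (hx₀ : x₀ ∈ argminD a b f)
    (hmax : ∀ x ∈ argminD a b f, x ≤ x₀) {ε r : ℝ} (hε : 0 ≤ ε)
    (h : ∀ y ∈ argminD a b (fun x => f x - ε * x), r ≤ y - x₀) : r ≤ omegaD a b f ε := by
  have hab : a ≤ b := hx₀.1.1.trans hx₀.1.2
  obtain ⟨y, hy⟩ := argminD_nonempty hab (hL.tilt ε).continuousOn
  refine (le_dD hx₀ hy fun x hx y hy => ?_).trans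
    (le_omegaD hab (hconv.tilt ε) (hL.tilt ε) (kappaD_tilt_le hconv hL hε))
  calc r ≤ y - x₀ := h y hy
    _ ≤ y - x := by linarith [hmax x hx]
    _ ≤ |x - y| := by rw [abs_sub_comm]; exact le_abs_self _

theorem eventually_omegaD_tilt_le (hconv : ConvexOn ℝ (Icc a b) f)
    (hL : LipschitzOnWith L f (Icc a b)) (hx₀ : x₀ ∈ argminD a b f) (hk : 1 < k) (hlam : 0 < lam)
    (hgrowth : Tendsto (fun δ => (f (x₀ + δ) - f x₀ - lam * δ ^ k) / δ ^ k) (𝓝[>] 0) (𝓝 0))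
    {c C : ℝ} (hc : c < 1) (hC : 1 < C) :
    ∀ᶠ ε in 𝓝[>] 0, omegaD a b (fun x => f x - ε * x) (c * ε) ≤
      (2 * C) ^ (1 / (k - 1)) * (ε / lam) ^ (1 / (k - 1)) := by
  have hC0 : 0 < C := by linarith
  have he : 0 < 1 / (k - 1) := one_div_pos.2 (sub_pos.2 hk)
  obtain ⟨δ₀, hδ₀, hwin⟩ := exists_growth_window hgrowth (by linarith) hlam
    (sub_pos.2 (inv_lt_one_of_one_lt₀ hC))
  have hlow : ∀ δ ∈ Ioo 0 δ₀, lam / C * δ ^ k ≤ f (x₀ + δ) - f x₀ := fun δ hδ => by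
    have h := (abs_le.1 (hwin δ (Ioo_subset_Ico_self hδ))).1
    have hsplit : lam / C * δ ^ k = lam * δ ^ k - (1 - C⁻¹) * lam * δ ^ k := by ring
    linarith
  filter_upwards [self_mem_nhdsWithin, nhdsWithin_le_nhds <|
    eventually_rpow_lt (g := fun ε => 2 * ε / (lam / C)) (by fun_prop) (by simp)
      he hδ₀] with ε hε hR
  have hε0 : 0 < ε := hε
  rw [← Real.mul_rpow (by positivity) (by positivity),
    show 2 * C * (ε / lam) = 2 * ε / (lam / C) by field_simp]
  exact omegaD_tilt_le hconv hL hx₀ hk (by positivity) hlow hε0 hc hR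

theorem eventually_mul_rpow_le_omegaD (hconv : ConvexOn ℝ (Icc a b) f)
    (hL : LipschitzOnWith L f (Icc a b)) (hx₀ : x₀ ∈ argminD a b f)
    (hmax : ∀ x ∈ argminD a b f, x ≤ x₀) (hx₀b : x₀ < b) (hk : 1 < k) (hlam : 0 < lam)
    (hgrowth : Tendsto (fun δ => (f (x₀ + δ) - f x₀ - lam * δ ^ k) / δ ^ k) (𝓝[>] 0) (𝓝 0))
    {q : ℝ} (hq0 : 0 ≤ q) (hq : q < k ^ (-(1 / (k - 1)))) :
    ∀ᶠ ε in 𝓝[>] 0, q * (ε / lam) ^ (1 / (k - 1)) ≤ omegaD a b f ε := by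
  set t := k ^ (-(1 / (k - 1)))
  have he : 0 < 1 / (k - 1) := one_div_pos.2 (sub_pos.2 hk)
  have ht1 : t ≤ 1 := Real.rpow_le_one_of_one_le_of_nonpos hk.le (by linarith)
  have hψ := strictMonoOn_sub_rpow hk
  have hψq : q - q ^ k < t - t ^ k := hψ ⟨hq0, hq.le⟩ ⟨by positivity, le_rfl⟩ hq
  obtain ⟨δ₀, hδ₀, hwin⟩ := exists_growth_window hgrowth (by linarith) hlam
    (η := ((t - t ^ k) - (q - q ^ k)) / 3) (by linarith)
  filter_upwards [self_mem_nhdsWithin, nhdsWithin_le_nhds <|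
    eventually_rpow_lt (g := fun ε => ε / lam) (by fun_prop) (by simp) he
      (lt_min hδ₀ (sub_pos.2 hx₀b))] with ε hε hB
  have hε0 : 0 < ε := hε
  refine le_omegaD_of_forall_argminD hconv hL hx₀ hmax hε0.le fun y hy => ?_
  refine mul_le_sub_of_mem_subD hx₀ hy.1
    (by simpa using mem_subD_tilt_iff.1 (zero_mem_subD_of_mem_argminD hy)) hε0 (by linarith)
    (by linarith) hwin (by positivity) ?_ (hB.trans_le (min_le_left _ _))
    (by linarith [min_le_right δ₀ (b - x₀)]) (by positivity) ht1 (hq.le.trans ht1)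
    fun p hp => ?_
  · rw [rpow_one_div_sub_one_rpow hk (by positivity)]
    field_simp
  · have := hψ.monotoneOn ⟨hp.1, hp.2.le.trans hq.le⟩ ⟨hq0, hq.le⟩ hp.2.le
    linarith

end Tilting

theorem modulus_continuity_under_tilting_general (a b : ℝ) (f : ℝ → ℝ)
    (hconv : ConvexOn ℝ (Icc a b) f) (hlip : ∃ L, LipschitzOnWith L f (Icc a b))
    (xl xr : ℝ) (hxlr : xl ≤ xr) (hxb : xr < b)
    (hargmin : argminD a b f = Icc xl xr)
    (kr lamr : ℝ) (hkr : 1 < kr) (hlamr : 0 < lamr)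
    (hgrowthr : Tendsto (fun δ : ℝ => (f (xr + δ) - f xr - lamr * δ ^ kr) / δ ^ kr)
      (nhdsWithin 0 (Ioi 0)) (nhds 0))
    (c C : ℝ) (hc : c < 1) (hC : 1 < C) :
    ∃ ε₀ > 0, ∀ ε ∈ Ioo (0 : ℝ) ε₀,
      omegaD a b (fun x => f x - ε * x) (c * ε) ≤
          (2 * C) ^ (1 / (kr - 1)) * (ε / lamr) ^ (1 / (kr - 1)) ∧
      (2 * C) ^ (1 / (kr - 1)) * (ε / lamr) ^ (1 / (kr - 1)) ≤
          Real.exp 1 * (2 * C ^ 2) ^ (1 / (kr - 1)) * omegaD a b f ε := by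
  obtain ⟨L, hL⟩ := hlip
  have hC0 : 0 < C := by linarith
  have hxr : xr ∈ argminD a b f := hargmin ▸ right_mem_Icc.2 hxlr
  have hmax : ∀ x ∈ argminD a b f, x ≤ xr := fun x hx => (hargmin ▸ hx).2
  set q := (Real.exp 1)⁻¹ * C ^ (-(1 / (kr - 1))) with hq_def
  have hCe : C ^ (-(1 / (kr - 1))) < 1 :=
    Real.rpow_lt_one_of_one_lt_of_neg hC (neg_neg_of_pos (one_div_pos.2 (sub_pos.2 hkr)))
  have hq : q < kr ^ (-(1 / (kr - 1))) :=
    (mul_lt_of_lt_one_right (by positivity) hCe).trans_le (inv_exp_one_le_rpow hkr)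
  obtain ⟨ε₀, hε₀, hsub⟩ := mem_nhdsGT_iff_exists_Ioo_subset.1
    ((eventually_omegaD_tilt_le hconv hL hxr hkr hlamr hgrowthr hc hC).and
      (eventually_mul_rpow_le_omegaD hconv hL hxr hmax hxb hkr hlamr hgrowthr (by positivity) hq))
  refine ⟨ε₀, hε₀, fun ε hε => ⟨(hsub hε).1, ?_⟩⟩
  calc (2 * C) ^ (1 / (kr - 1)) * (ε / lamr) ^ (1 / (kr - 1))
      = Real.exp 1 * (2 * C ^ 2) ^ (1 / (kr - 1)) * (q * (ε / lamr) ^ (1 / (kr - 1))) := by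
        rw [hq_def, Real.rpow_neg hC0.le, show 2 * C ^ 2 = 2 * C * C by ring,
          Real.mul_rpow (x := 2 * C) (by positivity) hC0.le]
        field_simp
    _ ≤ _ := by gcongr; exact (hsub hε).2

/-- Continuity of the modulus under tilting: with polynomial local growth
(`k_r ≥ k_l`, and `λ_r ≥ λ_l` if `k_r = k_l`), for `g(x) = f(x) − εx` and any constants
`c < 1 < C`, for all sufficiently small `ε > 0`,
`ω_g(cε) ≤ (2C)^{1/(k_r−1)}·(ε/λ_r)^{1/(k_r−1)} ≤ e·(2C²)^{1/(k_r−1)}·ω_f(ε)`. -/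
theorem modulus_continuity_under_tilting (a b : ℝ) (f : ℝ → ℝ)
    (hconv : ConvexOn ℝ (Icc a b) f) (hlip : ∃ L, LipschitzOnWith L f (Icc a b))
    (xl xr : ℝ) (hax : a < xl) (hxlr : xl ≤ xr) (hxb : xr < b)
    (hargmin : argminD a b f = Icc xl xr)
    (kl kr laml lamr : ℝ) (hkl : 1 < kl) (hkr : 1 < kr) (hlaml : 0 < laml) (hlamr : 0 < lamr)
    (hgrowthr : Tendsto (fun δ : ℝ => (f (xr + δ) - f xr - lamr * δ ^ kr) / δ ^ kr)
      (nhdsWithin 0 (Ioi 0)) (nhds 0))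
    (hgrowthl : Tendsto (fun δ : ℝ => (f (xl - δ) - f xl - laml * δ ^ kl) / δ ^ kl)
      (nhdsWithin 0 (Ioi 0)) (nhds 0))
    (hkk : kl ≤ kr) (hll : kr = kl → laml ≤ lamr)
    (c C : ℝ) (hc : c < 1) (hC : 1 < C) :
    ∃ ε₀ > 0, ∀ ε ∈ Ioo (0 : ℝ) ε₀,
      omegaD a b (fun x => f x - ε * x) (c * ε) ≤
          (2 * C) ^ (1 / (kr - 1)) * (ε / lamr) ^ (1 / (kr - 1)) ∧
      (2 * C) ^ (1 / (kr - 1)) * (ε / lamr) ^ (1 / (kr - 1)) ≤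
          Real.exp 1 * (2 * C ^ 2) ^ (1 / (kr - 1)) * omegaD a b f ε :=
  modulus_continuity_under_tilting_general a b f hconv hlip xl xr hxlr hxb hargmin kr lamr hkr hlamr
    hgrowthr c C hc hC
end
end
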